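/- arXiv:0901.2156 — 6 statements merged into one kernel-verified Lean document; each statement's English description precedes it below -/
import Mathlib

section
/- If a finite graded poset P is shellable (its maximal chains admit a shelling order), then every closed interval [a,b] of P is also shellable. -/
variable {P : Type*} [PartialOrder P]

/-- A finset `c` is a chain of the subposet `S`. -/
def IsChainIn (S : Set P) (c : Finset P) : Prop :=
  ↑c ⊆ S ∧ IsChain (· ≤ ·) (c : Set P)

/-- A finset `c` is a maximal chain of the subposet `S`. -/
def IsMaxChainIn (S : Set P) (c : Finset P) : Prop :=
  IsChainIn S c ∧ ∀ d : Finset P, IsChainIn S d → c ⊆ d → c = d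

/-- The subposet `S` is graded: in every closed interval of `S` all maximal chains
have the same length. -/
def GradedIn (S : Set P) : Prop :=
  ∀ a b : P, a ∈ S → b ∈ S → a ≤ b →
    ∀ c d : Finset P, IsMaxChainIn (S ∩ Set.Icc a b) c →
      IsMaxChainIn (S ∩ Set.Icc a b) d → c.card = d.card

/-- `lt` is a shelling order on the maximal chains of `S`: a strict total order such
that whenever `mi < mj` there are `mk < mj` and `x ∈ mj` with
`mi ∩ mj ⊆ mk ∩ mj = mj \ {x}`. -/
def IsShellingOrder [DecidableEq P] (S : Set P) (lt : Finset P → Finset P → Prop) : Prop :=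
  (∀ c d, IsMaxChainIn S c → IsMaxChainIn S d → c ≠ d → (lt c d ∨ lt d c)) ∧
  (∀ c d, lt c d → ¬ lt d c) ∧
  (∀ c d e, lt c d → lt d e → lt c e) ∧
  ∀ mi mj, IsMaxChainIn S mi → IsMaxChainIn S mj → lt mi mj →
    ∃ mk x, IsMaxChainIn S mk ∧ lt mk mj ∧ x ∈ mj ∧
      mi ∩ mj ⊆ mk ∩ mj ∧ mk ∩ mj = mj.erase x

/-- The subposet `S` is shellable: it is graded and its maximal chains admit a
shelling order. -/
def ShellableIn [DecidableEq P] (S : Set P) : Prop :=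
  GradedIn S ∧ ∃ lt, IsShellingOrder S lt


/-!
Order the maximal chains of `[a,b]` by their `lt`-first extensions to maximal chains of `P`;
this is injective because a maximal chain of `[a,b]` is the trace on `[a,b]` of any chain
containing it. Given `mi < mj`, take the shelling step `Mk, x` of `P` for their first
extensions. Minimality of the first extension of `mj` forces `x ∈ mj`, and since
`a, b ∈ mi ∩ mj ⊆ Mk`, the trace of `Mk` on `[a,b]` is a maximal chain of `[a,b]` preceding `mj`
that gives the required shelling step. Gradedness passes to intervals directly.
-/

open Set

lemma GradedIn.of_ordConnected {T : Set P} [T.OrdConnected] (h : GradedIn (univ : Set P)) :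
    GradedIn T := by
  intro a b ha hb hab c d hc hd
  have hT : T ∩ Icc a b = univ ∩ Icc a b := by
    rw [univ_inter, inter_eq_right]
    exact Set.Icc_subset T ha hb
  exact h a b trivial trivial hab c d (hT ▸ hc) (hT ▸ hd)

lemma IsChainIn.mono {S T : Set P} {c : Finset P} (hc : IsChainIn S c) (hST : S ⊆ T) :
    IsChainIn T c :=
  ⟨hc.1.trans hST, hc.2⟩

lemma IsChainIn.exists_isMaxChainIn_superset [Finite P] {S : Set P} {c : Finset P}
    (hc : IsChainIn S c) : ∃ m, IsMaxChainIn S m ∧ c ⊆ m := by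
  obtain ⟨m, ⟨hm, hcm⟩, hmax⟩ :=
    (toFinite {d : Finset P | IsChainIn S d ∧ c ⊆ d}).exists_maximal ⟨c, hc, subset_rfl⟩
  exact ⟨m, ⟨hm, fun d hd hmd => le_antisymm hmd (hmax ⟨hd, hcm.trans hmd⟩ hmd)⟩, hcm⟩

lemma IsMaxChainIn.mem_of_forall_comparable {S : Set P} {m : Finset P}
    (hm : IsMaxChainIn S m) {x : P} (hxS : x ∈ S) (hx : ∀ y ∈ S, x ≤ y ∨ y ≤ x) : x ∈ m := by
  classical
  have hchain : IsChainIn S (insert x m) := by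
    rw [IsChainIn, Finset.coe_insert]
    exact ⟨insert_subset hxS hm.1.1, hm.1.2.insert fun y hy _ => hx y (hm.1.1 hy)⟩
  rw [hm.2 _ hchain (Finset.subset_insert _ _)]
  exact Finset.mem_insert_self _ _

lemma IsMaxChainIn.endpoints_mem {a b : P} (hab : a ≤ b) {m : Finset P}
    (hm : IsMaxChainIn (Icc a b) m) : a ∈ m ∧ b ∈ m :=
  ⟨hm.mem_of_forall_comparable ⟨le_rfl, hab⟩ fun _ hy => Or.inl hy.1,
    hm.mem_of_forall_comparable ⟨hab, le_rfl⟩ fun _ hy => Or.inr hy.2⟩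

lemma IsMaxChainIn.eq_filter_of_subset {S : Set P} [DecidablePred (· ∈ S)] {c m : Finset P}
    (hc : IsMaxChainIn S c) (hm : IsChain (· ≤ ·) (m : Set P)) (hcm : c ⊆ m) :
    c = m.filter (· ∈ S) :=
  hc.2 _ ⟨fun _ hz => (Finset.mem_filter.1 hz).2,
      hm.mono (Finset.coe_subset.2 (Finset.filter_subset _ _))⟩
    fun _ hz => Finset.mem_filter.2 ⟨hcm hz, hc.1.1 hz⟩

/-- An element of `m` outside `[a,b]` lies below `a` or above `b`, so it is comparable with
everything in `[a,b]`; hence a chain of `[a,b]` through `m ∩ [a,b]` can be merged with `m`. -/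
lemma IsMaxChainIn.filter_Icc {m : Finset P} (hm : IsMaxChainIn univ m) {a b : P}
    (ha : a ∈ m) (hb : b ∈ m) [DecidablePred (· ∈ Icc a b)] :
    IsMaxChainIn (Icc a b) (m.filter (· ∈ Icc a b)) := by
  refine ⟨⟨fun _ hz => (Finset.mem_filter.1 hz).2,
    hm.1.2.mono (Finset.coe_subset.2 (Finset.filter_subset _ _))⟩, fun e he hme => ?_⟩
  classical
  have hcomp : ∀ z ∈ m, ∀ w ∈ e, z ≠ w → z ≤ w ∨ w ≤ z := by
    intro z hz w hw hzw
    have hw' := he.1 hw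
    rcases eq_or_ne z a with rfl | hza
    · exact Or.inl hw'.1
    rcases eq_or_ne z b with rfl | hzb
    · exact Or.inr hw'.2
    rcases hm.1.2 hz ha hza with hza' | haz
    · exact Or.inl (hza'.trans hw'.1)
    rcases hm.1.2 hz hb hzb with hzb' | hbz
    · exact he.2 (hme (Finset.mem_filter.2 ⟨hz, haz, hzb'⟩)) hw hzw
    · exact Or.inr (hw'.2.trans hbz)
  have hunion : IsChainIn univ (m ∪ e) :=
    ⟨subset_univ _, by rw [Finset.coe_union]; exact isChain_union.2 ⟨hm.1.2, he.2, hcomp⟩⟩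
  have hem : e ⊆ m := by
    rw [hm.2 _ hunion Finset.subset_union_left]
    exact Finset.subset_union_right
  exact hme.antisymm fun z hz => Finset.mem_filter.2 ⟨hem hz, he.1 hz⟩

def IsFirstMaxChainOver (S : Set P) (lt : Finset P → Finset P → Prop) (c m : Finset P) : Prop :=
  IsMaxChainIn S m ∧ c ⊆ m ∧ ∀ m', IsMaxChainIn S m' → c ⊆ m' → m' ≠ m → lt m m'

noncomputable def firstMaxChainOver (S : Set P) (lt : Finset P → Finset P → Prop)
    (c : Finset P) : Finset P :=
  Classical.epsilon (IsFirstMaxChainOver S lt c)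

section

variable [DecidableEq P] {S : Set P} {lt : Finset P → Finset P → Prop}

lemma IsShellingOrder.exists_isFirstMaxChainOver [Finite P] (h : IsShellingOrder S lt)
    {c : Finset P} (hc : IsChainIn S c) : ∃ m, IsFirstMaxChainOver S lt c m := by
  obtain ⟨m₀, hm₀, hcm₀⟩ := hc.exists_isMaxChainIn_superset
  have : IsTrans _ lt := ⟨h.2.2.1⟩
  have : Std.Irrefl lt := ⟨fun c hc => h.2.1 c c hc hc⟩
  obtain ⟨m, ⟨hm, hcm⟩, hmin⟩ := (Finite.wellFounded_of_trans_of_irrefl lt).has_min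
    {m | IsMaxChainIn S m ∧ c ⊆ m} ⟨m₀, hm₀, hcm₀⟩
  exact ⟨m, hm, hcm, fun m' hm' hcm' hne =>
    (h.1 m m' hm hm' hne.symm).resolve_right (hmin m' ⟨hm', hcm'⟩)⟩

lemma IsShellingOrder.isFirstMaxChainOver_firstMaxChainOver [Finite P]
    (h : IsShellingOrder S lt) {c : Finset P} (hc : IsChainIn S c) :
    IsFirstMaxChainOver S lt c (firstMaxChainOver S lt c) :=
  Classical.epsilon_spec (h.exists_isFirstMaxChainOver hc)

/-- Otherwise `c ⊆ M.erase x ⊆ Mk`, contradicting the minimality of `M`. -/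
lemma IsFirstMaxChainOver.mem_of_inter_eq_erase (h : IsShellingOrder S lt)
    {c M Mk : Finset P} (hM : IsFirstMaxChainOver S lt c M) (hMk : IsMaxChainIn S Mk)
    (hlt : lt Mk M) {x : P} (heq : Mk ∩ M = M.erase x) : x ∈ c := by
  by_contra hx
  have hcMk : c ⊆ Mk := fun z hz => by
    have : z ∈ Mk ∩ M := heq ▸ Finset.mem_erase.2 ⟨fun hzx => hx (hzx ▸ hz), hM.2.1 hz⟩
    exact (Finset.mem_inter.1 this).1
  by_cases hne : Mk = M
  · exact h.2.1 _ _ hlt (hne ▸ hlt)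
  · exact h.2.1 _ _ hlt (hM.2.2 Mk hMk hcMk hne)

variable [Finite P] {a b : P}

lemma IsShellingOrder.injOn_firstMaxChainOver_Icc (h : IsShellingOrder univ lt) :
    {c | IsMaxChainIn (Icc a b) c}.InjOn (firstMaxChainOver univ lt) := by
  classical
  intro c hc d hd hcd
  have hc' := h.isFirstMaxChainOver_firstMaxChainOver (hc.1.mono (subset_univ _))
  have hd' := h.isFirstMaxChainOver_firstMaxChainOver (hd.1.mono (subset_univ _))
  rw [hc.eq_filter_of_subset hc'.1.1.2 hc'.2.1, hd.eq_filter_of_subset hd'.1.1.2 hd'.2.1, hcd]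

lemma IsShellingOrder.exists_shelling_step_Icc (h : IsShellingOrder univ lt) (hab : a ≤ b)
    {mi mj : Finset P} (hi : IsMaxChainIn (Icc a b) mi) (hj : IsMaxChainIn (Icc a b) mj)
    (hij : lt (firstMaxChainOver univ lt mi) (firstMaxChainOver univ lt mj)) :
    ∃ mk x, IsMaxChainIn (Icc a b) mk ∧
      lt (firstMaxChainOver univ lt mk) (firstMaxChainOver univ lt mj) ∧ x ∈ mj ∧
      mi ∩ mj ⊆ mk ∩ mj ∧ mk ∩ mj = mj.erase x := by
  classical
  have hMi := h.isFirstMaxChainOver_firstMaxChainOver (hi.1.mono (subset_univ _))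
  have hMj := h.isFirstMaxChainOver_firstMaxChainOver (hj.1.mono (subset_univ _))
  obtain ⟨Mk, x, hMk, hkj, -, hsub, heq⟩ := h.2.2.2 _ _ hMi.1 hMj.1 hij
  have hcommon : mi ∩ mj ⊆ Mk :=
    ((Finset.inter_subset_inter hMi.2.1 hMj.2.1).trans hsub).trans Finset.inter_subset_left
  obtain ⟨hai, hbi⟩ := hi.endpoints_mem hab
  obtain ⟨haj, hbj⟩ := hj.endpoints_mem hab
  have hmk := hMk.filter_Icc (hcommon (Finset.mem_inter.2 ⟨hai, haj⟩))
    (hcommon (Finset.mem_inter.2 ⟨hbi, hbj⟩))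
  refine ⟨Mk.filter (· ∈ Icc a b), x, hmk, ?_, hMj.mem_of_inter_eq_erase h hMk hkj heq, ?_, ?_⟩
  · have hMk' := h.isFirstMaxChainOver_firstMaxChainOver (hmk.1.mono (subset_univ _))
    rcases eq_or_ne Mk (firstMaxChainOver univ lt (Mk.filter (· ∈ Icc a b))) with hfirst | hne
    · exact hfirst ▸ hkj
    · exact h.2.2.1 _ _ _ (hMk'.2.2 Mk hMk (Finset.filter_subset _ _) hne) hkj
  · intro z hz
    obtain ⟨hzi, hzj⟩ := Finset.mem_inter.1 hz
    exact Finset.mem_inter.2 ⟨Finset.mem_filter.2 ⟨hcommon hz, hi.1.1 hzi⟩, hzj⟩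
  · ext z
    have hz := Finset.ext_iff.1 heq z
    simp only [Finset.mem_inter, Finset.mem_filter, Finset.mem_erase] at hz ⊢
    constructor
    · rintro ⟨⟨hzk, -⟩, hzj⟩
      exact ⟨(hz.1 ⟨hzk, hMj.2.1 hzj⟩).1, hzj⟩
    · rintro ⟨hzx, hzj⟩
      exact ⟨⟨(hz.2 ⟨hzx, hMj.2.1 hzj⟩).1, hj.1.1 hzj⟩, hzj⟩

lemma IsShellingOrder.Icc (h : IsShellingOrder univ lt) (hab : a ≤ b) :
    IsShellingOrder (Icc a b) (InvImage lt (firstMaxChainOver univ lt)) :=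
  ⟨fun _ _ hc hd hne => h.1 _ _
      (h.isFirstMaxChainOver_firstMaxChainOver (hc.1.mono (subset_univ _))).1
      (h.isFirstMaxChainOver_firstMaxChainOver (hd.1.mono (subset_univ _))).1
      fun hcd => hne (h.injOn_firstMaxChainOver_Icc hc hd hcd),
    fun _ _ => h.2.1 _ _, fun _ _ _ => h.2.2.1 _ _ _,
    fun _ _ hi hj hij => h.exists_shelling_step_Icc hab hi hj hij⟩

end

/-- If a finite graded poset `P` is shellable, then every closed interval `[a,b]`
of `P` is also shellable. -/
theorem interval_shellable_of_shellable [Fintype P] [DecidableEq P]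
    (hP : ShellableIn (Set.univ : Set P)) (a b : P) (hab : a ≤ b) :
    ShellableIn (Set.Icc a b) := by
  obtain ⟨hgraded, lt, hlt⟩ := hP
  exact ⟨hgraded.of_ordConnected, _, hlt.Icc hab⟩
end

section
/- If a finite graded poset P is EL-shellable, then every closed interval of P is shellable. -/
variable {P : Type*} [PartialOrder P]

/-- `l` is a saturated chain from `x` to `y`, recorded as a list whose consecutive
entries are covering relations. -/
def SatFrom (x y : P) (l : List P) : Prop :=
  l.head? = some x ∧ l.getLast? = some y ∧ l.Chain' (· ⋖ ·)

/-- The label sequence of a (saturated) chain under an edge labeling `f`. -/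
def labelsOf {Λ : Type*} (f : P → P → Λ) (l : List P) : List Λ :=
  List.zipWith f l l.tail

/-- `f` is an EL-labeling: in every closed interval there is a unique maximal chain
with weakly increasing labels, and its label sequence is lexicographically smallest
among label sequences of maximal chains of the interval. -/
def IsELLabeling {Λ : Type*} [LinearOrder Λ] (f : P → P → Λ) : Prop :=
  ∀ x y : P, x ≤ y → ∃ l : List P, SatFrom x y l ∧
    (labelsOf f l).Chain' (· ≤ ·) ∧
    (∀ l' : List P, SatFrom x y l' → (labelsOf f l').Chain' (· ≤ ·) → l' = l) ∧
    (∀ l' : List P, SatFrom x y l' → l' ≠ l →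
      List.Lex (· < ·) (labelsOf f l) (labelsOf f l'))

/-!
Order the maximal chains of `[a, b]` lexicographically by their label sequences. Let `m'` come
before `m`; after their common bottom segment they part at some `x`. From `x` on, `m` is not
increasing (the increasing chain is lexicographically first), so it has a first descent
`x₁ ⋖ x₂ ⋖ x₃`. Replacing `x₂` by the middle element of the increasing chain of the rank-two
interval `[x₁, x₃]` gives an earlier chain meeting `m` in `m \ {x₂}`. And `x₂ ∉ m'`: otherwise the
increasing segment of `m` from `x` to `x₂` would make `m` lexicographically smaller than `m'`.
-/

theorem List.le_or_le_of_pairwise_lt {α : Type*} [Preorder α] {l₁ l₂ : List α} {a b w : α}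
    (hl : (l₁ ++ a :: b :: l₂).Pairwise (· < ·)) (hw : w ∈ l₁ ++ a :: b :: l₂) :
    w ≤ a ∨ b ≤ w := by
  simp only [List.pairwise_append, List.pairwise_cons, List.mem_append, List.mem_cons] at hl hw
  rcases hw with hw | rfl | rfl | hw
  · exact Or.inl (hl.2.2 w hw a (by simp)).le
  · exact Or.inl le_rfl
  · exact Or.inr le_rfl
  · exact Or.inr (hl.2.1.2.1 w hw).le

theorem List.head?_eq_some_of_pairwise {α : Type*} {R : α → α → Prop} {l : List α} {x : α}
    (hl : l.Pairwise R) (hx : x ∈ l) (hmin : ∀ p ∈ l, ¬ R p x) : l.head? = some x := by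
  obtain _ | ⟨a, t⟩ := l
  · simp at hx
  · rcases List.mem_cons.mp hx with rfl | hx
    · rfl
    · exact absurd (List.rel_of_pairwise_cons hl hx) (hmin a List.mem_cons_self)

theorem List.getLast?_eq_some_of_pairwise {α : Type*} {R : α → α → Prop} {l : List α} {x : α}
    (hl : l.Pairwise R) (hx : x ∈ l) (hmax : ∀ p ∈ l, ¬ R x p) : l.getLast? = some x := by
  rw [← List.head?_reverse]
  exact List.head?_eq_some_of_pairwise (List.pairwise_reverse.mpr hl) (List.mem_reverse.mpr hx)
    fun p hp => hmax p (List.mem_reverse.mp hp)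

theorem List.Lex.append_of_length_eq {α : Type*} {r : α → α → Prop} :
    ∀ {s t : List α}, List.Lex r s t → s.length = t.length →
      ∀ u v : List α, List.Lex r (s ++ u) (t ++ v)
  | _, _, .nil, hlen, _, _ => by simp at hlen
  | _, _, .cons h, hlen, u, v => .cons (append_of_length_eq h (by simpa using hlen) u v)
  | _, _, .rel hr, _, _, _ => .rel hr

theorem List.mem_and_mem_iff_of_nodup {α : Type*} {A B : List α} {y z : α}
    (hy : (A ++ y :: B).Nodup) (hzy : z ≠ y) (p : α) :
    p ∈ A ++ z :: B ∧ p ∈ A ++ y :: B ↔ p ∈ A ++ y :: B ∧ p ≠ y := by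
  simp only [List.nodup_append, List.nodup_cons, List.mem_cons, List.mem_append] at hy ⊢
  grind

section SaturatedChains

variable {x y : P} {l : List P}

theorem satFrom_iff :
    SatFrom x y l ↔ l.head? = some x ∧ l.getLast? = some y ∧ l.IsChain (· ⋖ ·) :=
  Iff.rfl

theorem satFrom_singleton_iff {a : P} : SatFrom x y [a] ↔ a = x ∧ a = y := by
  simp [satFrom_iff, eq_comm]

theorem satFrom_cons_cons_iff {a q : P} {t : List P} :
    SatFrom x y (a :: q :: t) ↔ a = x ∧ a ⋖ q ∧ SatFrom q y (q :: t) := by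
  simp [satFrom_iff, List.isChain_cons_cons, eq_comm, and_left_comm]

theorem satFrom_append_cons_iff {c : P} {u v : List P} :
    SatFrom x y (u ++ c :: v) ↔ SatFrom x c (u ++ [c]) ∧ SatFrom c y (c :: v) := by
  have hhead : (u ++ c :: v).head? = (u ++ [c]).head? := by cases u <;> rfl
  rw [satFrom_iff, satFrom_iff, satFrom_iff, List.isChain_split, hhead, List.getLast?_append_cons,
    List.getLast?_concat, List.head?_cons]
  tauto

theorem IsMaxChainIn.mem_of_comparable {S : Set P} {c : Finset P} (hc : IsMaxChainIn S c)
    {z : P} (hz : z ∈ S) (hcomp : ∀ w ∈ c, z ≤ w ∨ w ≤ z) : z ∈ c := by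
  classical
  have hchain : IsChainIn S (insert z c) := by
    refine ⟨by simpa [Set.insert_subset_iff] using ⟨hz, hc.1.1⟩, ?_⟩
    rw [Finset.coe_insert]
    exact hc.1.2.insert fun w hw _ => hcomp w hw
  rw [hc.2 _ hchain (Finset.subset_insert z c)]
  exact Finset.mem_insert_self z c

namespace SatFrom

theorem exists_eq_cons (h : SatFrom x y l) : ∃ t, l = x :: t :=
  List.head?_eq_some_iff.mp h.1

theorem exists_eq_append (h : SatFrom x y l) : ∃ u, l = u ++ [y] :=
  List.getLast?_eq_some_iff.mp h.2.1

theorem pairwise_lt (h : SatFrom x y l) : l.Pairwise (· < ·) :=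
  List.isChain_iff_pairwise.mp (h.2.2.imp fun _ _ => CovBy.lt)

theorem nodup (h : SatFrom x y l) : l.Nodup :=
  h.pairwise_lt.imp ne_of_lt

theorem mem_Icc (h : SatFrom x y l) {p : P} (hp : p ∈ l) : p ∈ Set.Icc x y := by
  constructor
  · obtain ⟨t, rfl⟩ := h.exists_eq_cons
    rcases List.mem_cons.mp hp with rfl | hp
    · exact le_rfl
    · exact (List.rel_of_pairwise_cons h.pairwise_lt hp).le
  · obtain ⟨u, rfl⟩ := h.exists_eq_append
    rcases List.mem_append.mp hp with hp | hp
    · exact (List.pairwise_append.mp h.pairwise_lt).2.2 p hp y (List.mem_singleton_self y) |>.le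
    · rw [List.mem_singleton.mp hp]

theorem eq_singleton (h : SatFrom x x l) : l = [x] := by
  obtain ⟨_ | ⟨p, t⟩, rfl⟩ := h.exists_eq_cons
  · rfl
  · exact absurd (h.mem_Icc (by simp : p ∈ x :: p :: t)).2
      (List.rel_of_pairwise_cons h.pairwise_lt List.mem_cons_self).not_ge

theorem le (h : SatFrom x y l) : x ≤ y := by
  obtain ⟨t, rfl⟩ := h.exists_eq_cons
  exact (h.mem_Icc List.mem_cons_self).2

theorem mem_of_comparable {z : P} :
    ∀ {x : P} {l : List P}, SatFrom x y l → z ∈ Set.Icc x y → (∀ w ∈ l, z ≤ w ∨ w ≤ z) → z ∈ l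
  | _, [], h, _, _ => by simp [satFrom_iff] at h
  | _, [a], h, hz, _ => by
    obtain ⟨rfl, rfl⟩ := satFrom_singleton_iff.mp h
    simp [le_antisymm hz.2 hz.1]
  | _, a :: q :: t, h, hz, hcomp => by
    obtain ⟨rfl, haq, hq⟩ := satFrom_cons_cons_iff.mp h
    rcases hcomp q (by simp) with hzq | hqz
    · rcases haq.eq_or_eq hz.1 hzq with rfl | rfl <;> simp
    · exact List.mem_cons_of_mem _ (mem_of_comparable hq ⟨hqz, hz.2⟩
        fun w hw => hcomp w (List.mem_cons_of_mem _ hw))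

theorem isMaxChainIn [DecidableEq P] (h : SatFrom x y l) :
    IsMaxChainIn (Set.Icc x y) l.toFinset := by
  have hchain : IsChainIn (Set.Icc x y) l.toFinset := by
    refine ⟨fun p hp => h.mem_Icc (List.mem_toFinset.mp hp), fun p hp q hq hne => ?_⟩
    have : Std.Symm fun a b : P => a ≤ b ∨ b ≤ a := ⟨fun _ _ => Or.symm⟩
    exact (h.pairwise_lt.imp (S := fun a b : P => a ≤ b ∨ b ≤ a) fun hab => Or.inl hab.le).forall
      (List.mem_toFinset.mp hp) (List.mem_toFinset.mp hq) hne
  refine ⟨hchain, fun d hd hsub => Finset.Subset.antisymm hsub fun z hz => ?_⟩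
  refine List.mem_toFinset.mpr (h.mem_of_comparable (hd.1 hz) fun w hw => ?_)
  rcases eq_or_ne z w with rfl | hne
  · exact Or.inl le_rfl
  · exact hd.2 hz (hsub (List.mem_toFinset.mpr hw)) hne

theorem length_eq (hgraded : GradedIn (Set.univ : Set P)) {l' : List P}
    (h : SatFrom x y l) (h' : SatFrom x y l') : l.length = l'.length := by
  classical
  have hcard := hgraded x y trivial trivial h.le l.toFinset l'.toFinset
    (by simpa using h.isMaxChainIn) (by simpa using h'.isMaxChainIn)
  rwa [List.toFinset_card_of_nodup h.nodup, List.toFinset_card_of_nodup h'.nodup] at hcard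

end SatFrom

end SaturatedChains

section ChainList

/-- Sorting along a linear extension of `≤` lists every chain in increasing order. -/
def linearExtensionLE (p q : P) : Prop := toLinearExtension p ≤ toLinearExtension q

instance : IsTrans P linearExtensionLE := ⟨fun _ _ _ => le_trans (α := LinearExtension P)⟩
instance : Std.Antisymm (linearExtensionLE (P := P)) :=
  ⟨fun _ _ => le_antisymm (α := LinearExtension P)⟩
instance : Std.Total (linearExtensionLE (P := P)) :=
  ⟨fun p q => le_total (toLinearExtension p) (toLinearExtension q)⟩
noncomputable instance : DecidableRel (linearExtensionLE (P := P)) := Classical.decRel _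

noncomputable def chainList (c : Finset P) : List P := c.sort linearExtensionLE

theorem mem_chainList {c : Finset P} {p : P} : p ∈ chainList c ↔ p ∈ c :=
  Finset.mem_sort _

theorem toFinset_chainList [DecidableEq P] (c : Finset P) : (chainList c).toFinset = c :=
  Finset.sort_toFinset _ _

theorem pairwise_lt_chainList {c : Finset P} (hc : IsChain (· ≤ ·) (c : Set P)) :
    (chainList c).Pairwise (· < ·) := by
  refine ((Finset.pairwise_sort c _).and (Finset.sort_nodup c _)).imp_of_mem
    fun ha hb ⟨hab, hne⟩ => ?_
  have hcomp := hc (mem_chainList.mp ha) (mem_chainList.mp hb) hne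
  refine lt_of_le_of_ne (hcomp.resolve_right fun hba => hne ?_) hne
  exact le_antisymm (α := LinearExtension P) hab (toLinearExtension.monotone hba)

theorem SatFrom.chainList_toFinset [DecidableEq P] {x y : P} {l : List P} (h : SatFrom x y l) :
    chainList l.toFinset = l :=
  (List.toFinset_sort _ h.nodup).mpr
    (h.pairwise_lt.imp fun hab => toLinearExtension.monotone hab.le)

theorem IsMaxChainIn.satFrom_chainList {x y : P} (hxy : x ≤ y) {c : Finset P}
    (hc : IsMaxChainIn (Set.Icc x y) c) : SatFrom x y (chainList c) := by
  have hlt := pairwise_lt_chainList hc.1.2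
  have hIcc : ∀ p ∈ chainList c, p ∈ Set.Icc x y := fun p hp => hc.1.1 (mem_chainList.mp hp)
  have hx : x ∈ c := hc.mem_of_comparable ⟨le_rfl, hxy⟩ fun w hw => Or.inl (hc.1.1 hw).1
  have hy : y ∈ c := hc.mem_of_comparable ⟨hxy, le_rfl⟩ fun w hw => Or.inr (hc.1.1 hw).2
  refine ⟨List.head?_eq_some_of_pairwise hlt (mem_chainList.mpr hx)
      fun p hp => (hIcc p hp).1.not_gt,
    List.getLast?_eq_some_of_pairwise hlt (mem_chainList.mpr hy)
      fun p hp => (hIcc p hp).2.not_gt,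
    List.isChain_iff_forall_rel_of_append_cons_cons.mpr fun a b l₁ l₂ hl => ?_⟩
  rw [hl] at hlt hIcc
  have hmem_split : ∀ {w}, w ∈ c ↔ w ∈ l₁ ++ a :: b :: l₂ := by
    rw [← hl]; exact mem_chainList.symm
  have hab : a < b :=
    List.rel_of_pairwise_cons (List.pairwise_append.mp hlt).2.1 List.mem_cons_self
  by_contra hcov
  obtain ⟨z, haz, hzb⟩ := exists_lt_lt_of_not_covBy hab hcov
  -- `z` is comparable with every element of the chain, so maximality puts it on the list
  have hz : z ∈ c := hc.mem_of_comparable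
    ⟨(hIcc a (by simp)).1.trans haz.le, hzb.le.trans (hIcc b (by simp)).2⟩ fun w hw =>
      (List.le_or_le_of_pairwise_lt hlt (hmem_split.mp hw)).symm.imp
        (fun hbw => hzb.le.trans hbw) fun hwa => hwa.trans haz.le
  rcases List.le_or_le_of_pairwise_lt hlt (hmem_split.mp hz) with hza | hbz
  · exact hza.not_gt haz
  · exact hbz.not_gt hzb

end ChainList

section Labels

variable {α Λ : Type*}

theorem labelsOf_cons_cons (f : α → α → Λ) (a b : α) (t : List α) :
    labelsOf f (a :: b :: t) = f a b :: labelsOf f (b :: t) := rfl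

theorem labelsOf_append_cons (f : α → α → Λ) (c : α) :
    ∀ u v : List α, labelsOf f (u ++ c :: v) = labelsOf f (u ++ [c]) ++ labelsOf f (c :: v)
  | [], _ => rfl
  | [_], _ => rfl
  | a :: a' :: u, v => by
    have ih := labelsOf_append_cons f c (a' :: u) v
    simp only [List.cons_append] at ih ⊢
    rw [labelsOf_cons_cons, labelsOf_cons_cons, ih, List.cons_append]

theorem length_labelsOf (f : α → α → Λ) (l : List α) : (labelsOf f l).length = l.length - 1 := by
  simp [labelsOf]

theorem exists_first_descent [LinearOrder Λ] (f : α → α → Λ) :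
    ∀ l : List α, ¬ (labelsOf f l).IsChain (· ≤ ·) →
      ∃ w x₁ x₂ x₃ v, l = w ++ x₁ :: x₂ :: x₃ :: v ∧
        (labelsOf f (w ++ [x₁, x₂])).IsChain (· ≤ ·) ∧ f x₂ x₃ < f x₁ x₂
  | [], h | [_], h | [_, _], h => absurd (by simp [labelsOf]) h
  | a :: b :: c :: t, h => by
    by_cases habc : f a b ≤ f b c
    · have htail : ¬ (labelsOf f (b :: c :: t)).IsChain (· ≤ ·) := fun h' =>
        h (by rw [labelsOf_cons_cons]; exact List.isChain_cons_cons.mpr ⟨habc, h'⟩)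
      obtain ⟨w, x₁, x₂, x₃, v, heq, hinc, hdes⟩ := exists_first_descent f _ htail
      refine ⟨a :: w, x₁, x₂, x₃, v, by rw [heq, List.cons_append], ?_, hdes⟩
      -- a prefix of `b :: c :: t` of length at least two starts with `b, c`
      obtain ⟨r, hr⟩ : ∃ r, w ++ [x₁, x₂] = b :: c :: r := by
        rcases w with _ | ⟨b', _ | ⟨c', r⟩⟩ <;> simp_all
      rw [List.cons_append, hr, labelsOf_cons_cons, labelsOf_cons_cons]
      rw [hr, labelsOf_cons_cons] at hinc
      exact List.isChain_cons_cons.mpr ⟨habc, hinc⟩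
    · exact ⟨[], a, b, c, t, rfl, by simp [labelsOf], lt_of_not_ge habc⟩

end Labels

section ELLabeling

variable {Λ : Type*} [LinearOrder Λ] {f : P → P → Λ}

theorem IsELLabeling.lex_of_isChain (hf : IsELLabeling f) {x y : P} {l l' : List P}
    (h : SatFrom x y l) (hinc : (labelsOf f l).IsChain (· ≤ ·)) (h' : SatFrom x y l')
    (hne : l' ≠ l) : List.Lex (· < ·) (labelsOf f l) (labelsOf f l') := by
  obtain ⟨l₀, -, -, huniq, hmin⟩ := hf x y h.le
  obtain rfl := huniq l h hinc
  exact hmin l' h' hne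

theorem lex_labelsOf_append_cons (hgraded : GradedIn (Set.univ : Set P)) (hf : IsELLabeling f)
    {x c : P} {s s' : List P} (hs : SatFrom x c (s ++ [c]))
    (hinc : (labelsOf f (s ++ [c])).IsChain (· ≤ ·)) (hs' : SatFrom x c (s' ++ [c]))
    (hne : s' ≠ s) (r r' : List P) :
    List.Lex (· < ·) (labelsOf f (s ++ c :: r)) (labelsOf f (s' ++ c :: r')) := by
  rw [labelsOf_append_cons f c s, labelsOf_append_cons f c s']
  refine (hf.lex_of_isChain hs hinc hs' fun h => hne ?_).append_of_length_eq ?_ _ _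
  · simpa using h
  · rw [length_labelsOf, length_labelsOf, hs.length_eq hgraded hs']

theorem exists_swap_of_descent (hgraded : GradedIn (Set.univ : Set P)) (hf : IsELLabeling f)
    {x y x₁ x₂ x₃ : P} {w v : List P} (h : SatFrom x y (w ++ x₁ :: x₂ :: x₃ :: v))
    (hdes : f x₂ x₃ < f x₁ x₂) :
    ∃ z, z ≠ x₂ ∧ SatFrom x y (w ++ x₁ :: z :: x₃ :: v) ∧
      List.Lex (· < ·) (labelsOf f (w ++ x₁ :: z :: x₃ :: v))
        (labelsOf f (w ++ x₁ :: x₂ :: x₃ :: v)) := by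
  obtain ⟨hw, hx₁⟩ := satFrom_append_cons_iff.mp h
  obtain ⟨hx₁₃, hx₃⟩ := satFrom_append_cons_iff (u := [x₁, x₂]).mp hx₁
  obtain ⟨l₀, hl₀, hinc₀, -, hmin⟩ := hf x₁ x₃ hx₁₃.le
  -- by gradedness the increasing chain of `[x₁, x₃]` has length three, like `[x₁, x₂, x₃]`
  obtain ⟨z, rfl⟩ : ∃ z, l₀ = [x₁, z, x₃] := by
    have hlen := hl₀.length_eq hgraded hx₁₃
    obtain ⟨_ | ⟨z, _ | ⟨x₃', _ | _⟩⟩, rfl⟩ := hl₀.exists_eq_cons <;> simp at hlen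
    obtain ⟨-, -, hz⟩ := satFrom_cons_cons_iff.mp hl₀
    obtain ⟨-, rfl⟩ := satFrom_singleton_iff.mp (satFrom_cons_cons_iff.mp hz).2.2
    exact ⟨z, rfl⟩
  have hzx₂ : z ≠ x₂ := by
    rintro rfl
    exact (List.isChain_pair.mp hinc₀).not_gt hdes
  refine ⟨z, hzx₂, satFrom_append_cons_iff.mpr ⟨hw, ?_⟩, ?_⟩
  · exact satFrom_append_cons_iff (u := [x₁, z]).mpr ⟨hl₀, hx₃⟩
  · rw [labelsOf_append_cons f x₁ w (z :: x₃ :: v), labelsOf_append_cons f x₁ w (x₂ :: x₃ :: v)]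
    refine List.Lex.append_left _ ?_ _
    rw [labelsOf_cons_cons, labelsOf_cons_cons, labelsOf_cons_cons, labelsOf_cons_cons]
    exact (hmin _ hx₁₃ fun h => hzx₂ (by simp_all)).append_of_length_eq rfl
      (labelsOf f (x₃ :: v)) (labelsOf f (x₃ :: v))

end ELLabeling

section Shelling

variable {Λ : Type*} [LinearOrder Λ] {f : P → P → Λ}

/-- `lk` precedes `lj` and meets it in the facet `lj \ {y}`, which contains `li ∩ lj`. -/
def IsShellingWitness (f : P → P → Λ) (x b : P) (li lj lk : List P) (y : P) : Prop :=
  SatFrom x b lk ∧ List.Lex (· < ·) (labelsOf f lk) (labelsOf f lj) ∧ y ∈ lj ∧ y ∉ li ∧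
    ∀ p, p ∈ lk ∧ p ∈ lj ↔ p ∈ lj ∧ p ≠ y

theorem IsShellingWitness.cons {x p b y : P} {ti tj lk : List P}
    (hw : IsShellingWitness f p b (p :: ti) (p :: tj) lk y) (hxp : x ⋖ p)
    (hj : SatFrom p b (p :: tj)) :
    IsShellingWitness f x b (x :: p :: ti) (x :: p :: tj) (x :: lk) y := by
  obtain ⟨hk, hlex, hyj, hyi, hmem⟩ := hw
  obtain ⟨lk, rfl⟩ := hk.exists_eq_cons
  have hx : ∀ {l}, SatFrom p b l → x ∉ l := fun hl hx => (hl.mem_Icc hx).1.not_gt hxp.lt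
  have hyx : y ≠ x := fun h => hx hj (h ▸ hyj)
  refine ⟨satFrom_cons_cons_iff.mpr ⟨rfl, hxp, hk⟩, ?_, List.mem_cons_of_mem _ hyj,
    by simp [hyx, hyi], fun q => ?_⟩
  · rw [labelsOf_cons_cons, labelsOf_cons_cons]
    exact .cons hlex
  · rcases eq_or_ne q x with rfl | hqx
    · simp [hyx.symm]
    · simpa [hqx] using hmem q

theorem exists_shellingWitness_of_ne (hgraded : GradedIn (Set.univ : Set P))
    (hf : IsELLabeling f) {x b p q : P} {ti tj : List P} (hi : SatFrom x b (x :: p :: ti))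
    (hj : SatFrom x b (x :: q :: tj)) (hpq : p ≠ q)
    (hlex : ¬ List.Lex (· < ·) (labelsOf f (x :: q :: tj)) (labelsOf f (x :: p :: ti))) :
    ∃ lk y, IsShellingWitness f x b (x :: p :: ti) (x :: q :: tj) lk y := by
  have hdesc : ¬ (labelsOf f (x :: q :: tj)).IsChain (· ≤ ·) := fun hinc =>
    hlex (hf.lex_of_isChain hj hinc hi (by simp [hpq]))
  obtain ⟨w, x₁, x₂, x₃, v, heq, hinc, hdes⟩ := exists_first_descent f _ hdesc
  have htake : ∀ r, (w ++ x₁ :: x₂ :: r).take 2 = (w ++ [x₁, x₂]).take 2 := fun r => by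
    rw [show w ++ x₁ :: x₂ :: r = (w ++ [x₁, x₂]) ++ r by simp,
      List.take_append_of_le_length (by simp)]
  rw [heq] at hj hlex ⊢
  obtain ⟨z, hzx₂, hk, hlexk⟩ := exists_swap_of_descent hgraded hf hj hdes
  -- `x₂` lies above the point where `li` and `lj` part, and below it `lj` is increasing
  have hx₂ : x₂ ∉ x :: p :: ti := by
    intro hmem
    obtain ⟨ui, vi, hsplit⟩ := List.append_of_mem hmem
    have hj' : SatFrom x b ((w ++ [x₁]) ++ x₂ :: x₃ :: v) := by simpa using hj
    rw [hsplit] at hi hlex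
    have hui : ui ≠ w ++ [x₁] := by
      rintro rfl
      have h₁ := congrArg (List.take 2) heq
      have h₂ := congrArg (List.take 2) hsplit
      simp only [List.append_assoc, List.singleton_append, htake] at h₁ h₂
      exact hpq (by simpa using h₂.trans h₁.symm)
    refine hlex ?_
    simpa using lex_labelsOf_append_cons hgraded hf (satFrom_append_cons_iff.mp hj').1
      (by simpa using hinc) (satFrom_append_cons_iff.mp hi).1 hui (x₃ :: v) vi
  refine ⟨_, x₂, hk, hlexk, by simp, hx₂, fun p' => ?_⟩
  simpa using List.mem_and_mem_iff_of_nodup (A := w ++ [x₁]) (B := x₃ :: v)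
    (by simpa using hj.nodup) hzx₂ p'

theorem exists_shellingWitness (hgraded : GradedIn (Set.univ : Set P)) (hf : IsELLabeling f)
    {b : P} (lj : List P) {x : P} {li : List P} (hi : SatFrom x b li) (hj : SatFrom x b lj)
    (hne : li ≠ lj) (hlex : ¬ List.Lex (· < ·) (labelsOf f lj) (labelsOf f li)) :
    ∃ lk y, IsShellingWitness f x b li lj lk y := by
  induction lj generalizing x li with
  | nil => simp [satFrom_iff] at hj
  | cons a t ih =>
    obtain ⟨_ | ⟨p, ti⟩, rfl⟩ := hi.exists_eq_cons
    · obtain ⟨-, rfl⟩ := satFrom_singleton_iff.mp hi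
      exact absurd hj.eq_singleton.symm hne
    obtain rfl : a = x := Option.some.inj hj.1
    obtain _ | ⟨q, tj⟩ := t
    · obtain ⟨-, rfl⟩ := satFrom_singleton_iff.mp hj
      exact absurd hi.eq_singleton hne
    rcases eq_or_ne p q with rfl | hpq
    · obtain ⟨-, hxp, hi'⟩ := satFrom_cons_cons_iff.mp hi
      obtain ⟨-, -, hj'⟩ := satFrom_cons_cons_iff.mp hj
      obtain ⟨lk, y, hw⟩ := ih hi' hj' (by simpa using hne) fun h =>
        hlex (by rw [labelsOf_cons_cons, labelsOf_cons_cons]; exact .cons h)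
      exact ⟨_, y, hw.cons hxp hj'⟩
    · exact exists_shellingWitness_of_ne hgraded hf hi hj hpq hlex

end Shelling

theorem GradedIn.of_subset_of_ordConnected {S T : Set P}
    (hS : GradedIn S) (hTS : T ⊆ S) (hT : T.OrdConnected) : GradedIn T := by
  intro a b ha hb hab c d hc hd
  have hIcc : ∀ U : Set P, T ⊆ U → U ∩ Set.Icc a b = Set.Icc a b := fun U hU =>
    Set.inter_eq_right.mpr ((hT.out ha hb).trans hU)
  rw [hIcc T subset_rfl, ← hIcc S hTS] at hc hd
  exact hS a b (hTS ha) (hTS hb) hab c d hc hd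

section ShellingOrder

variable {Λ : Type*} [LinearOrder Λ]

noncomputable def shellingKey (f : P → P → Λ) (c : Finset P) :
    List Λ ×ₗ LinearExtension (Finset P) :=
  toLex (labelsOf f (chainList c), toLinearExtension c)

theorem isShellingOrder_shellingKey [DecidableEq P] (hgraded : GradedIn (Set.univ : Set P))
    {f : P → P → Λ} (hf : IsELLabeling f) {a b : P} (hab : a ≤ b) :
    IsShellingOrder (Set.Icc a b) fun c d => shellingKey f c < shellingKey f d := by
  refine ⟨fun c d _ _ hne => lt_or_gt_of_ne fun h => hne ?_, fun _ _ => lt_asymm,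
    fun _ _ _ => lt_trans, fun mi mj hmi hmj hlt => ?_⟩
  · exact congrArg (fun k => (ofLex k).2) h
  have hi := hmi.satFrom_chainList hab
  have hj := hmj.satFrom_chainList hab
  have hne : chainList mi ≠ chainList mj := fun h =>
    hlt.ne (by rw [← toFinset_chainList mi, h, toFinset_chainList])
  obtain ⟨lk, y, hk, hlexk, hyj, hyi, hmem⟩ :=
    exists_shellingWitness hgraded hf _ hi hj hne (Prod.Lex.monotone_fst _ _ hlt.le).not_gt
  have hfacet : lk.toFinset ∩ mj = mj.erase y := by
    ext p
    rw [Finset.mem_inter, Finset.mem_erase, List.mem_toFinset, ← mem_chainList]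
    exact (hmem p).trans and_comm
  refine ⟨lk.toFinset, y, hk.isMaxChainIn, ?_, mem_chainList.mp hyj, ?_, hfacet⟩
  · refine Prod.Lex.toLex_lt_toLex.mpr (Or.inl ?_)
    rw [hk.chainList_toFinset]
    exact hlexk
  · rw [hfacet]
    exact fun p hp => Finset.mem_erase.mpr
      ⟨by rintro rfl; exact hyi (mem_chainList.mpr (Finset.mem_inter.mp hp).1),
        (Finset.mem_inter.mp hp).2⟩

end ShellingOrder

theorem interval_shellable_of_EL_general [DecidableEq P]
    (hgraded : GradedIn (Set.univ : Set P))
    {Λ : Type*} [LinearOrder Λ] (f : P → P → Λ) (hf : IsELLabeling f)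
    (a b : P) (hab : a ≤ b) : ShellableIn (Set.Icc a b) :=
  ⟨hgraded.of_subset_of_ordConnected (Set.subset_univ _) Set.ordConnected_Icc,
    _, isShellingOrder_shellingKey hgraded hf hab⟩

/-- If a finite graded poset is EL-shellable, then every closed interval is shellable. -/
theorem interval_shellable_of_EL [Fintype P] [DecidableEq P]
    (hgraded : GradedIn (Set.univ : Set P))
    {Λ : Type*} [LinearOrder Λ] (f : P → P → Λ) (hf : IsELLabeling f)
    (a b : P) (hab : a ≤ b) : ShellableIn (Set.Icc a b) :=
  interval_shellable_of_EL_general hgraded f hf a b hab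
end

section
/- Let D be a nontrivial positive domain from generator x to generator y in a grid diagram, and suppose D has nonzero coefficient at the square immediately to the top-right of some coordinate x₁ of x. Then D contains (as 2-chains) a rectangle whose bottom-left corner is x₁ and whose top-right corner is another coordinate of x. -/
open scoped Classical

/-- The indicator 2-chain of the coordinates of a generator `x` (a bijection of
`Fin n`), in the planar picture: the point `(i, x i)` for each `i`. -/
noncomputable def genInd (n : ℕ) (x : Fin n → Fin n) : ℤ × ℤ → ℤ := fun p =>
  if ∃ i : Fin n, (i : ℤ) = p.1 ∧ ((x i : ℤ) = p.2) then 1 else 0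

/-- The mixed second difference of a planar 2-chain at a lattice point. -/
def delta (D : ℤ × ℤ → ℤ) (p : ℤ × ℤ) : ℤ :=
  D p - D (p.1 - 1, p.2) - D (p.1, p.2 - 1) + D (p.1 - 1, p.2 - 1)

/-!
Walk up the column of `(a, x a)` to the first square `(a, d)` where `D` vanishes, then
right to the first column `c` containing a zero `(c, J)` of `D` at a height in
`[x a, d)`; `D` is nonzero on `[a, c) × [x a, d)`. Summing `delta D = x - y` over the
box `(a, c] × (J, d]` telescopes to `D (c, d) - D (a, d) - D (c, J) + D (a, J) ≥ 1`, so
the box contains a coordinate `(b, x b)` of `x`, and `[a, b) × [x a, x b)` lies inside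
the nonvanishing rectangle.
-/

open Finset

theorem sum_Ioc_sub_pred {M : Type*} [AddCommGroup M] (f : ℤ → M) {a c : ℤ} (hac : a ≤ c) :
    ∑ i ∈ Ioc a c, (f i - f (i - 1)) = f c - f a := by
  induction c, hac using Int.leInduction with
  | base => simp
  | succ c hac ih =>
    rw [← insert_Ioc_right_eq_Ioc_add_one hac, sum_insert (by simp), ih, add_sub_cancel_right]
    abel

theorem sum_delta_Ioc_prod_Ioc (D : ℤ × ℤ → ℤ) {a c J d : ℤ} (hac : a ≤ c) (hJd : J ≤ d) :
    ∑ p ∈ Ioc a c ×ˢ Ioc J d, delta D p = D (c, d) - D (a, d) - D (c, J) + D (a, J) := by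
  have hcol : ∀ i, ∑ j ∈ Ioc J d, delta D (i, j)
      = (D (i, d) - D (i, J)) - (D (i - 1, d) - D (i - 1, J)) := fun i =>
    calc ∑ j ∈ Ioc J d, delta D (i, j)
        = ∑ j ∈ Ioc J d, ((D (i, j) - D (i - 1, j)) - (D (i, j - 1) - D (i - 1, j - 1))) :=
          sum_congr rfl fun j _ => by simp only [delta]; ring
      _ = (D (i, d) - D (i - 1, d)) - (D (i, J) - D (i - 1, J)) :=
          sum_Ioc_sub_pred (fun j => D (i, j) - D (i - 1, j)) hJd
      _ = _ := by ring
  rw [sum_product]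
  simp only [hcol]
  exact (sum_Ioc_sub_pred (fun i => D (i, d) - D (i, J)) hac).trans (by ring)

theorem genInd_nonneg (n : ℕ) (x : Fin n → Fin n) (p : ℤ × ℤ) : 0 ≤ genInd n x p := by
  unfold genInd; split_ifs <;> norm_num

theorem exists_coord_of_genInd_pos {n : ℕ} {x : Fin n → Fin n} {p : ℤ × ℤ}
    (h : 0 < genInd n x p) : ∃ i : Fin n, p = ((i : ℤ), (x i : ℤ)) := by
  unfold genInd at h; split_ifs at h with hp
  · obtain ⟨i, h1, h2⟩ := hp
    exact ⟨i, Prod.ext h1.symm h2.symm⟩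
  · exact absurd h (lt_irrefl 0)

theorem exists_coord_in_box {n : ℕ} {x y : Fin n → Fin n} {D : ℤ × ℤ → ℤ}
    (hdom : ∀ p : ℤ × ℤ, delta D p = genInd n x p - genInd n y p)
    {a c J d : ℤ} (hac : a ≤ c) (hJd : J ≤ d)
    (hcorners : 0 < D (c, d) - D (a, d) - D (c, J) + D (a, J)) :
    ∃ k : Fin n, a < k ∧ (k : ℤ) ≤ c ∧ J < x k ∧ (x k : ℤ) ≤ d := by
  set box := Ioc a c ×ˢ Ioc J d
  have hsum : 0 < ∑ p ∈ box, genInd n x p := by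
    have hy : 0 ≤ ∑ p ∈ box, genInd n y p := sum_nonneg fun p _ => genInd_nonneg n y p
    rw [← sum_delta_Ioc_prod_Ioc D hac hJd] at hcorners
    simp only [hdom, sum_sub_distrib] at hcorners
    linarith
  obtain ⟨p, hp, hxp⟩ :=
    exists_lt_of_sum_lt (s := box) (f := fun _ => (0 : ℤ)) (by simpa using hsum)
  obtain ⟨k, rfl⟩ := exists_coord_of_genInd_pos hxp
  simp only [box, mem_product, mem_Ioc] at hp
  exact ⟨k, hp.1.1, hp.1.2, hp.2.1, hp.2.2⟩

theorem exists_first_above {P : ℤ → Prop} {a N : ℤ} (ha : ¬ P a) (hN : P N) (haN : a < N) :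
    ∃ c, a < c ∧ P c ∧ ∀ i, a ≤ i → i < c → ¬ P i := by
  obtain ⟨c, ⟨hac, hc⟩, hmin⟩ :=
    Int.exists_least_of_bdd (P := fun i => a < i ∧ P i) ⟨a, fun i h => h.1.le⟩ ⟨N, haN, hN⟩
  refine ⟨c, hac, hc, fun i hai hic hi => ?_⟩
  rcases hai.eq_or_lt with rfl | hai
  · exact ha hi
  · exact (hmin i ⟨hai, hi⟩).not_gt hic

theorem exists_maximal_nonzero_rect {M : Type*} [Zero M] (D : ℤ × ℤ → M) {a y₀ N : ℤ}
    (h₀ : D (a, y₀) ≠ 0) (haN : a < N) (hyN : y₀ < N)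
    (hvan : ∀ p : ℤ × ℤ, N ≤ p.1 ∨ N ≤ p.2 → D p = 0) :
    ∃ c d J, a < c ∧ y₀ ≤ J ∧ J < d ∧ D (a, d) = 0 ∧ D (c, J) = 0 ∧
      ∀ i j, a ≤ i → i < c → y₀ ≤ j → j < d → D (i, j) ≠ 0 := by
  obtain ⟨d, hyd, hDad, hcol⟩ :=
    exists_first_above (P := fun j => D (a, j) = 0) h₀ (hvan _ (Or.inr le_rfl)) hyN
  obtain ⟨c, hac, ⟨J, hyJ, hJd, hDcJ⟩, hrows⟩ :=
    exists_first_above (P := fun i => ∃ j, y₀ ≤ j ∧ j < d ∧ D (i, j) = 0)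
      (fun ⟨j, hyj, hjd, h⟩ => hcol j hyj hjd h) ⟨y₀, le_rfl, hyd, hvan _ (Or.inl le_rfl)⟩ haN
  exact ⟨c, d, J, hac, hyJ, hJd, hDad, hDcJ,
    fun i j hai hic hyj hjd h => hrows i hai hic ⟨j, hyj, hjd, h⟩⟩

theorem contains_rect_at_corner_general (n : ℕ) (x y : Fin n → Fin n)
    (D : ℤ × ℤ → ℤ)
    (hsupp : ∀ p : ℤ × ℤ, D p ≠ 0 → 0 ≤ p.1 ∧ p.1 < n ∧ 0 ≤ p.2 ∧ p.2 < n)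
    (hdom : ∀ p : ℤ × ℤ, delta D p = genInd n x p - genInd n y p)
    (hpos : ∀ p, 0 ≤ D p)
    (a : Fin n) (ha : 0 < D ((a : ℤ), (x a : ℤ))) :
    ∃ b : Fin n, (a : ℤ) < (b : ℤ) ∧ (x a : ℤ) < (x b : ℤ) ∧
      ∀ p : ℤ × ℤ, (a : ℤ) ≤ p.1 → p.1 < (b : ℤ) →
        (x a : ℤ) ≤ p.2 → p.2 < (x b : ℤ) → 1 ≤ D p := by
  have hvan : ∀ p : ℤ × ℤ, (n : ℤ) ≤ p.1 ∨ (n : ℤ) ≤ p.2 → D p = 0 := fun p hp => by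
    by_contra h
    have := hsupp p h
    omega
  obtain ⟨c, d, J, hac, hJ, hJd, hDad, hDcJ, hrect⟩ :=
    exists_maximal_nonzero_rect D ha.ne' (by omega) (by omega) hvan
  have hDaJ := (hpos _).lt_of_ne' (hrect a J le_rfl hac hJ hJd)
  obtain ⟨b, hab, hbc, hJb, hbd⟩ :=
    exists_coord_in_box hdom hac.le hJd.le (by linarith [hpos (c, d)])
  refine ⟨b, hab, by omega, fun p hap hpb hxp hpx => ?_⟩
  have := (hpos p).lt_of_ne' (hrect p.1 p.2 hap (by omega) hxp (by omega))
  omega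

/-- Let `D` be a (nontrivial) positive domain from `x` to `y` in the planar
picture of a grid diagram (squares indexed by `{0,…,n-1}²`, square `(i,j)` having
bottom-left corner `(i,j)`), and suppose `D` has nonzero coefficient at the square
immediately to the top-right of the coordinate `(a, x a)` of `x`.  Then `D`
contains, as 2-chains, a rectangle whose bottom-left corner is `(a, x a)` and
whose top-right corner `(b, x b)` is another coordinate of `x`. -/
theorem contains_rect_at_corner (n : ℕ) (x y : Fin n → Fin n)
    (hx : Function.Bijective x) (hy : Function.Bijective y)
    (D : ℤ × ℤ → ℤ)
    (hsupp : ∀ p : ℤ × ℤ, D p ≠ 0 → 0 ≤ p.1 ∧ p.1 < n ∧ 0 ≤ p.2 ∧ p.2 < n)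
    (hdom : ∀ p : ℤ × ℤ, delta D p = genInd n x p - genInd n y p)
    (hpos : ∀ p, 0 ≤ D p)
    (a : Fin n) (ha : 0 < D ((a : ℤ), (x a : ℤ))) :
    ∃ b : Fin n, (a : ℤ) < (b : ℤ) ∧ (x a : ℤ) < (x b : ℤ) ∧
      ∀ p : ℤ × ℤ, (a : ℤ) ≤ p.1 → p.1 < (b : ℤ) →
        (x a : ℤ) ≤ p.2 → p.2 < (x b : ℤ) → 1 ≤ D p :=
  contains_rect_at_corner_general n x y D hsupp hdom hpos a ha
end

section
/- In the grid poset 𝒢 (elements x = x̃·∏U_i^{k_i}, ordered by y ⪯ x iff there is a positive domain in 𝒟(x,y)), the relation ⪯ is a partial order: it is reflexive, transitive, and antisymmetric. -/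
/-- Domain condition `∂(∂D|_α) = y − x` on the torus, via mixed second differences. -/
def IsGridDomain (n : ℕ) (x y : Equiv.Perm (ZMod n)) (D : ZMod n × ZMod n → ℤ) : Prop :=
  ∀ i j : ZMod n,
    D (i, j) - D (i - 1, j) - D (i, j - 1) + D (i - 1, j - 1)
      = (if x i = j then 1 else 0) - (if y i = j then 1 else 0)

/-- Elements of the grid poset `𝒢`: a generator `x̃` (a permutation) together with
a multidegree `k : ℤ/n → ℕ` recording the exponents of the `U_i`. -/
abbrev Gel (n : ℕ) := Equiv.Perm (ZMod n) × (ZMod n → ℕ)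

/-- The grid diagram is encoded by a permutation `ρ`: the marking `O_i` occupies
the square `(i, ρ i)` and the marking `X_i` occupies the square `(i - 1, ρ i)`
(so that `X_i, O_i` share a row and `O_i, X_{i+1}` share a column).
`D ∈ 𝒟(x, y)`: a domain from `x̃` to `ỹ` with `n_{X_i}(D) = 0` and
`n_{O_i}(D) = l_i − k_i`. -/
def InD (n : ℕ) (ρ : Equiv.Perm (ZMod n)) (x y : Gel n) (D : ZMod n × ZMod n → ℤ) : Prop :=
  IsGridDomain n x.1 y.1 D ∧ (∀ i : ZMod n, D (i, ρ (i + 1)) = 0) ∧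
  (∀ i : ZMod n, D (i, ρ i) = (y.2 i : ℤ) - (x.2 i : ℤ))

/-- `y ⪯ x` in the grid poset: there is a positive domain in `𝒟(x, y)`. -/
def preG (n : ℕ) (ρ : Equiv.Perm (ZMod n)) (y x : Gel n) : Prop :=
  ∃ D, InD n ρ x y D ∧ ∀ p, 0 ≤ D p

/-!
A positive domain `D ∈ 𝒟(x, y)` composed with a positive domain `D' ∈ 𝒟(y, x)` gives a
positive periodic domain `D + D'` avoiding the `X` markings. Periodic domains satisfy the
rectangle rule `E(i, j) + E(i', j') = E(i, j') + E(i', j)`; choosing the opposite corner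
`(i', j')` of the rectangle so that both `(i, j')` and `(i', j)` carry `X` markings writes
`E(i, j)` as minus a nonnegative number, so `D + D' = 0`, hence `D = 0` and `x = y`.
-/

theorem ZMod.apply_eq_of_forall_apply_sub_one {n : ℕ} [NeZero n] {α : Type*}
    {f : ZMod n → α} (h : ∀ j, f j = f (j - 1)) (a b : ZMod n) : f a = f b := by
  have shift : ∀ m : ℕ, f (b + m) = f b := by
    intro m
    induction m with
    | zero => simp
    | succ m ih => rw [h, Nat.cast_succ, ← add_assoc, add_sub_cancel_right, ih]
  simpa using shift (a - b).val

namespace IsGridDomain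

variable {n : ℕ} {x y z : Equiv.Perm (ZMod n)} {D E : ZMod n × ZMod n → ℤ}

theorem zero : IsGridDomain n x x 0 := fun _ _ => by simp

theorem add (hD : IsGridDomain n x y D) (hE : IsGridDomain n y z E) :
    IsGridDomain n x z (D + E) := fun i j => by
  simp only [Pi.add_apply]
  linarith [hD i j, hE i j]

theorem add_eq_add_swap [NeZero n] (hE : IsGridDomain n x x E) (i i' j j' : ZMod n) :
    E (i, j) + E (i', j') = E (i, j') + E (i', j) := by
  have hmixed : ∀ a b, E (a, b) - E (a - 1, b) = E (a, b - 1) - E (a - 1, b - 1) := by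
    intro a b
    have := hE a b
    rw [sub_self] at this
    linarith
  have hcol : ∀ a, E (a, j) - E (a, j') = E (a - 1, j) - E (a - 1, j') := by
    intro a
    linarith [ZMod.apply_eq_of_forall_apply_sub_one (hmixed a) j j']
  linarith [ZMod.apply_eq_of_forall_apply_sub_one hcol i i']

end IsGridDomain

namespace InD

variable {n : ℕ} {ρ : Equiv.Perm (ZMod n)} {x y z : Gel n} {D E : ZMod n × ZMod n → ℤ}

theorem zero : InD n ρ x x 0 :=
  ⟨IsGridDomain.zero, fun _ => rfl, fun _ => by simp⟩

theorem add (hD : InD n ρ x y D) (hE : InD n ρ y z E) : InD n ρ x z (D + E) := by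
  obtain ⟨hD, hDX, hDO⟩ := hD
  obtain ⟨hE, hEX, hEO⟩ := hE
  refine ⟨hD.add hE, fun i => ?_, fun i => ?_⟩
  · simp [hDX i, hEX i]
  · simp only [Pi.add_apply, hDO i, hEO i]
    ring

theorem eq_zero_of_nonneg [NeZero n] (hD : InD n ρ x x D) (hD_nonneg : ∀ p, 0 ≤ D p) :
    D = 0 := by
  obtain ⟨hD, hDX, -⟩ := hD
  funext ⟨i, j⟩
  have hX : D (ρ.symm j - 1, j) = 0 := by simpa using hDX (ρ.symm j - 1)
  have hrect := hD.add_eq_add_swap i (ρ.symm j - 1) j (ρ (i + 1))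
  rw [hDX i, hX] at hrect
  show D (i, j) = 0
  linarith [hD_nonneg (i, j), hD_nonneg (ρ.symm j - 1, ρ (i + 1))]

theorem eq_of_zero (hD : InD n ρ x y 0) : x = y := by
  obtain ⟨hD, -, hDO⟩ := hD
  refine Prod.ext (Equiv.ext fun i => ?_) (funext fun i => ?_)
  · by_contra hne
    simpa [hne, Ne.symm hne] using hD i (x.1 i)
  · exact_mod_cast (sub_eq_zero.mp (hDO i).symm).symm

end InD

/-- The relation `⪯` of the grid poset `𝒢` is a partial order: reflexive,
transitive and antisymmetric. -/
theorem gridPoset_partialOrder (n : ℕ) [NeZero n] (ρ : Equiv.Perm (ZMod n)) :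
    (∀ x : Gel n, preG n ρ x x) ∧
    (∀ x y z : Gel n, preG n ρ z y → preG n ρ y x → preG n ρ z x) ∧
    (∀ x y : Gel n, preG n ρ y x → preG n ρ x y → x = y) := by
  refine ⟨fun x => ⟨0, InD.zero, fun _ => le_rfl⟩, ?_, ?_⟩
  · rintro x y z ⟨D, hD, hD_nonneg⟩ ⟨E, hE, hE_nonneg⟩
    exact ⟨E + D, hE.add hD, fun p => add_nonneg (hE_nonneg p) (hD_nonneg p)⟩
  · rintro x y ⟨D, hD, hD_nonneg⟩ ⟨D', hD', hD'_nonneg⟩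
    have hsum : D + D' = 0 :=
      (hD.add hD').eq_zero_of_nonneg fun p => add_nonneg (hD_nonneg p) (hD'_nonneg p)
    have hD_zero : D = 0 := ((add_eq_zero_iff_of_nonneg hD_nonneg hD'_nonneg).mp hsum).1
    exact InD.eq_of_zero (hD_zero ▸ hD)
end

section
/- If D is a domain from generator x̃ to generator ỹ in a grid diagram, then M(x̃) − M(ỹ) = μ(D) − 2·Σ_i n_{O_i}(D) and A(x̃) − A(ỹ) = Σ_i (n_{X_i}(D) − n_{O_i}(D)), where M and A are the Maslov and Alexander gradings defined via the function J. -/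
/-- `J(a,b) = 1/2` if `(a₁−b₁)(a₂−b₂) > 0` and `0` otherwise. -/
def Jpt (a b : ℚ × ℚ) : ℚ := if 0 < (a.1 - b.1) * (a.2 - b.2) then 1/2 else 0

/-- Bilinear extension of `J` to formal sums of points, each indexed by `ℤ/n`. -/
def JJ (n : ℕ) [NeZero n] (f g : ZMod n → ℚ × ℚ) : ℚ :=
  ∑ i : ZMod n, ∑ j : ZMod n, Jpt (f i) (g j)

/-- Planar coordinates (cutting the torus open at column 0 and row 0) of the
points of a generator `x`. -/
def genPt (n : ℕ) (x : Equiv.Perm (ZMod n)) (i : ZMod n) : ℚ × ℚ :=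
  ((i.val : ℚ), (((x i).val : ℚ)))

/-- Planar coordinates of the marking `O_i`, at the center of the square `(i, ρ i)`. -/
def oPt (n : ℕ) (ρ : Equiv.Perm (ZMod n)) (i : ZMod n) : ℚ × ℚ :=
  ((i.val : ℚ) + 1/2, ((ρ i).val : ℚ) + 1/2)

/-- Planar coordinates of the marking `X_i`, at the center of the square `(i-1, ρ i)`. -/
def xPt (n : ℕ) (ρ : Equiv.Perm (ZMod n)) (i : ZMod n) : ℚ × ℚ :=
  (((i - 1 : ZMod n).val : ℚ) + 1/2, ((ρ i).val : ℚ) + 1/2)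

/-- Maslov grading `M(x̃) = J(x̃ − 𝕆, x̃ − 𝕆) + 1`, expanded bilinearly. -/
def MGr (n : ℕ) [NeZero n] (ρ x : Equiv.Perm (ZMod n)) : ℚ :=
  JJ n (genPt n x) (genPt n x) - JJ n (genPt n x) (oPt n ρ)
    - JJ n (oPt n ρ) (genPt n x) + JJ n (oPt n ρ) (oPt n ρ) + 1

/-- Alexander grading `A(x̃) = J(x̃ − (𝕏+𝕆)/2, 𝕏 − 𝕆) − (n−1)/2`, expanded bilinearly. -/
def AGr (n : ℕ) [NeZero n] (ρ x : Equiv.Perm (ZMod n)) : ℚ :=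
  JJ n (genPt n x) (xPt n ρ) - JJ n (genPt n x) (oPt n ρ)
    - (1/2) * (JJ n (xPt n ρ) (xPt n ρ) - JJ n (xPt n ρ) (oPt n ρ)
        + JJ n (oPt n ρ) (xPt n ρ) - JJ n (oPt n ρ) (oPt n ρ))
    - ((n : ℚ) - 1)/2

/-- The local multiplicity `n_p(D)` of a domain at the lattice point `p`: the
average of the coefficients of the four adjacent squares. -/
def nPt (n : ℕ) (D : ZMod n × ZMod n → ℤ) (p : ZMod n × ZMod n) : ℚ :=
  ((D p : ℚ) + D (p.1 - 1, p.2) + D (p.1, p.2 - 1) + D (p.1 - 1, p.2 - 1)) / 4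

/-- Lipshitz's formula for the Maslov index: `μ(D) = Σ_{p∈x̃} n_p(D) + Σ_{p∈ỹ} n_p(D)`. -/
def maslovIndex (n : ℕ) [NeZero n] (x y : Equiv.Perm (ZMod n))
    (D : ZMod n × ZMod n → ℤ) : ℚ :=
  (∑ i : ZMod n, nPt n D (i, x i)) + ∑ i : ZMod n, nPt n D (i, y i)

/-!
Let `Φ` assign to each square of the cut-open diagram the value `J(x̃ − ỹ, c)` at its center
`c`. For a single lattice point `q`, the mixed second difference of `J(q, ·)` over the four
squares around a lattice point `p` is `1` if `q = p` and `0` otherwise, so `Φ` is itself a domain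
from `x̃` to `ỹ`; the wrap-around of the torus does no harm because `J(x̃ − ỹ, ·)` vanishes at the
centers of the squares just outside `[0, n)²`. Any domain `D` from `x̃` to `ỹ` therefore differs
from `Φ` by a function `A(column) + B(row)`, and such a function contributes `ΣA + ΣB` to every
sum along a permutation, so it changes neither side of either formula.

For `Φ` the multiplicities at the markings are `J(x̃ − ỹ, 𝕆)` and `J(x̃ − ỹ, 𝕏)`, which gives the
Alexander formula and the `𝕆`-terms of the Maslov formula. Finally, the average of `J(q, ·)` over
the four squares around `p` is `J(q, p) + ¼·[q and p share a coordinate]`, and summing this over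
`p ∈ x̃ ∪ ỹ` gives `μ(Φ) = J(x̃, x̃) − J(ỹ, ỹ)`.
-/

open Finset

theorem Equiv.Perm.sum_apply_eq_of_indep_fst {α β : Type*} [Fintype α] [AddCommMonoid β]
    (g : α → α → β) (hg : ∀ k k' w, g k w = g k' w) (x y : Equiv.Perm α) :
    ∑ k, g k (x k) = ∑ k, g k (y k) :=
  calc ∑ k, g k (x k) = ∑ k, g (y.symm (x k)) (x k) := sum_congr rfl fun k _ => hg _ _ _
    _ = ∑ k, g (y.symm (y k)) (y k) :=
      (Equiv.sum_comp x (fun m => g (y.symm m) m)).trans (Equiv.sum_comp y _).symm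
    _ = ∑ k, g k (y k) := by simp

theorem ZMod.val_sub_one_intCast {n : ℕ} [NeZero n] (i : ZMod n) :
    (((i - 1).val : ℕ) : ℤ) = (if i = 0 then (n : ℤ) else i.val) - 1 := by
  rw [← ZMod.cast_eq_val, ZMod.cast_sub_one, ZMod.cast_eq_val]

theorem ZMod.apply_eq_apply_zero_of_forall {n : ℕ} [NeZero n] {α : Type*} {f : ZMod n → α}
    (h : ∀ i, f i = f (i - 1)) (i : ZMod n) : f i = f 0 := by
  obtain ⟨m, rfl⟩ := ZMod.natCast_zmod_surjective i
  induction m with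
  | zero => simp
  | succ m ih => rw [h, Nat.cast_succ, add_sub_cancel_right, ih]

namespace GridDiagram

lemma Jpt_comm (a b : ℚ × ℚ) : Jpt a b = Jpt b a := by
  rw [Jpt, Jpt, ← neg_sub a.1, ← neg_sub a.2, neg_mul_neg]

/-- The center of the unit square with lower-left corner `(i, j)`. -/
def halfPt (i j : ℤ) : ℚ × ℚ := ((i : ℚ) + 1/2, (j : ℚ) + 1/2)

lemma halfPt_natCast (a b : ℕ) : halfPt a b = ((a : ℚ) + 1/2, (b : ℚ) + 1/2) := by
  simp [halfPt]

lemma sub_half_pos_iff (a i : ℤ) : 0 < (a : ℚ) - (i + 1/2) ↔ i < a := by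
  constructor
  · intro h
    exact_mod_cast (show (i : ℚ) < a by linarith)
  · intro h
    have : (i : ℚ) + 1 ≤ a := by exact_mod_cast h
    linarith

lemma sub_half_neg_iff (a i : ℤ) : (a : ℚ) - (i + 1/2) < 0 ↔ ¬ i < a := by
  rw [not_lt]
  constructor
  · intro h
    exact Int.lt_add_one_iff.mp (by exact_mod_cast (show (a : ℚ) < i + 1 by linarith))
  · intro h
    have : (a : ℚ) ≤ i := by exact_mod_cast h
    linarith

lemma Jpt_halfPt (a b i j : ℤ) :
    Jpt ((a : ℚ), (b : ℚ)) (halfPt i j) = if (i < a ↔ j < b) then 1/2 else 0 := by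
  simp only [Jpt, halfPt, mul_pos_iff, sub_half_pos_iff, sub_half_neg_iff,
    ← iff_iff_and_or_not_and_not]

lemma Jpt_intCast (a b i j : ℤ) :
    Jpt ((a : ℚ), (b : ℚ)) ((i : ℚ), (j : ℚ))
      = if (i < a ∧ j < b) ∨ (a < i ∧ b < j) then 1/2 else 0 := by
  simp only [Jpt, mul_pos_iff, sub_pos, sub_neg, Int.cast_lt]

/-- For lattice points `a`, `b`: the average of `J(a, ·)` over the four points `b + (±½, ±½)`. -/
def JptAvg (a b : ℚ × ℚ) : ℚ := Jpt a b + if a.1 = b.1 ∨ a.2 = b.2 then 1/4 else 0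

lemma JptAvg_comm (a b : ℚ × ℚ) : JptAvg a b = JptAvg b a := by
  simp only [JptAvg, Jpt_comm a b, eq_comm (a := a.1), eq_comm (a := a.2)]

lemma Jpt_halfPt_mixedDiff (a b i j : ℤ) :
    Jpt ((a : ℚ), (b : ℚ)) (halfPt i j) - Jpt ((a : ℚ), (b : ℚ)) (halfPt (i - 1) j)
      - Jpt ((a : ℚ), (b : ℚ)) (halfPt i (j - 1))
      + Jpt ((a : ℚ), (b : ℚ)) (halfPt (i - 1) (j - 1))
      = if a = i ∧ b = j then 1 else 0 := by
  simp only [Jpt_halfPt, iff_iff_and_or_not_and_not]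
  split_ifs <;> first | omega | norm_num

lemma Jpt_halfPt_avg (a b i j : ℤ) :
    (Jpt ((a : ℚ), (b : ℚ)) (halfPt i j) + Jpt ((a : ℚ), (b : ℚ)) (halfPt (i - 1) j)
      + Jpt ((a : ℚ), (b : ℚ)) (halfPt i (j - 1))
      + Jpt ((a : ℚ), (b : ℚ)) (halfPt (i - 1) (j - 1))) / 4
      = JptAvg ((a : ℚ), (b : ℚ)) ((i : ℚ), (j : ℚ)) := by
  simp only [JptAvg, Jpt_halfPt, Jpt_intCast, Int.cast_inj, iff_iff_and_or_not_and_not]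
  split_ifs <;> first | omega | norm_num

variable {n : ℕ} [NeZero n]

def pairSum (K : ℚ × ℚ → ℚ × ℚ → ℚ) (f g : ZMod n → ℚ × ℚ) : ℚ :=
  ∑ i, ∑ j, K (f i) (g j)

lemma pairSum_comm {K : ℚ × ℚ → ℚ × ℚ → ℚ} (hK : ∀ a b, K a b = K b a)
    (f g : ZMod n → ℚ × ℚ) : pairSum K f g = pairSum K g f := by
  rw [pairSum, sum_comm]
  exact sum_congr rfl fun _ _ => sum_congr rfl fun _ _ => hK _ _

lemma JJ_comm (f g : ZMod n → ℚ × ℚ) : JJ n f g = JJ n g f :=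
  pairSum_comm Jpt_comm f g

lemma MGr_sub_MGr (ρ x y : Equiv.Perm (ZMod n)) :
    MGr n ρ x - MGr n ρ y = JJ n (genPt n x) (genPt n x) - JJ n (genPt n y) (genPt n y)
      - 2 * (JJ n (genPt n x) (oPt n ρ) - JJ n (genPt n y) (oPt n ρ)) := by
  simp only [MGr, JJ_comm (oPt n ρ)]
  ring

lemma AGr_sub_AGr (ρ x y : Equiv.Perm (ZMod n)) :
    AGr n ρ x - AGr n ρ y = (JJ n (genPt n x) (xPt n ρ) - JJ n (genPt n y) (xPt n ρ))
      - (JJ n (genPt n x) (oPt n ρ) - JJ n (genPt n y) (oPt n ρ)) := by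
  simp only [AGr]
  ring

lemma pairSum_JptAvg_self (z : Equiv.Perm (ZMod n)) :
    pairSum JptAvg (genPt n z) (genPt n z) = JJ n (genPt n z) (genPt n z) + n / 4 := by
  simp only [pairSum, JptAvg, genPt, Nat.cast_inj, (ZMod.val_injective n).eq_iff,
    z.injective.eq_iff, or_self, sum_add_distrib, sum_ite_eq, mem_univ, if_true, sum_const,
    card_univ, ZMod.card, nsmul_eq_mul]
  simp only [JJ, genPt]
  ring

def genJ (z : Equiv.Perm (ZMod n)) (c : ℚ × ℚ) : ℚ := ∑ k, Jpt (genPt n z k) c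

/-- `J(x̃ − ỹ, c)`. -/
def jDiff (x y : Equiv.Perm (ZMod n)) (c : ℚ × ℚ) : ℚ := genJ x c - genJ y c

lemma sum_jDiff (x y : Equiv.Perm (ZMod n)) (f : ZMod n → ℚ × ℚ) :
    ∑ i, jDiff x y (f i) = JJ n (genPt n x) f - JJ n (genPt n y) f := by
  simp only [jDiff, genJ, JJ, sum_sub_distrib]
  congr 1 <;> exact sum_comm

lemma genPt_eq_intCast (z : Equiv.Perm (ZMod n)) (k : ZMod n) :
    genPt n z k = (((k.val : ℤ) : ℚ), (((z k).val : ℤ) : ℚ)) := by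
  simp [genPt]

lemma genJ_halfPt (z : Equiv.Perm (ZMod n)) (i j : ℤ) :
    genJ z (halfPt i j) = ∑ k, if (i < k.val ↔ j < (z k).val) then 1/2 else 0 := by
  simp only [genJ, genPt_eq_intCast, Jpt_halfPt]

lemma genJ_mixedDiff (z : Equiv.Perm (ZMod n)) (i j : ZMod n) :
    genJ z (halfPt i.val j.val) - genJ z (halfPt (i.val - 1) j.val)
      - genJ z (halfPt i.val (j.val - 1)) + genJ z (halfPt (i.val - 1) (j.val - 1))
      = if z i = j then 1 else 0 := by
  simp only [genJ, genPt_eq_intCast, ← sum_sub_distrib, ← sum_add_distrib, Jpt_halfPt_mixedDiff,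
    Nat.cast_inj, (ZMod.val_injective n).eq_iff]
  rw [Fintype.sum_eq_single i fun k hk => if_neg fun h => hk h.1]
  simp

lemma genJ_avg (z : Equiv.Perm (ZMod n)) (i j : ZMod n) :
    (genJ z (halfPt i.val j.val) + genJ z (halfPt (i.val - 1) j.val)
      + genJ z (halfPt i.val (j.val - 1)) + genJ z (halfPt (i.val - 1) (j.val - 1))) / 4
      = ∑ k, JptAvg (genPt n z k) ((i.val : ℚ), (j.val : ℚ)) := by
  simp only [genJ, genPt_eq_intCast, ← sum_add_distrib, sum_div, Jpt_halfPt_avg]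
  simp

lemma jDiff_halfPt_eq_zero_of_fst {i : ℤ} (hi : i = -1 ∨ i = n - 1) (x y : Equiv.Perm (ZMod n))
    (j : ℤ) : jDiff x y (halfPt i j) = 0 := by
  rw [jDiff, genJ_halfPt, genJ_halfPt, sub_eq_zero]
  refine Equiv.Perm.sum_apply_eq_of_indep_fst
    (fun k w => if (i < k.val ↔ j < w.val) then (1/2 : ℚ) else 0) (fun k k' w => ?_) x y
  have := k.val_lt; have := k'.val_lt
  simp only [show i < (k.val : ℤ) ↔ i < (k'.val : ℤ) by omega]

lemma jDiff_halfPt_eq_zero_of_snd {j : ℤ} (hj : j = -1 ∨ j = n - 1) (x y : Equiv.Perm (ZMod n))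
    (i : ℤ) : jDiff x y (halfPt i j) = 0 := by
  rw [jDiff, genJ_halfPt, genJ_halfPt, sub_eq_zero]
  refine sum_congr rfl fun k _ => ?_
  have := (x k).val_lt; have := (y k).val_lt
  simp only [show j < ((x k).val : ℤ) ↔ j < ((y k).val : ℤ) by omega]

/- Cutting the torus open: the column left of column `0` is column `n - 1`, and `J(x̃ − ỹ, ·)`
vanishes at the centers of both. -/
lemma jDiff_halfPt_val_sub_one_fst (x y : Equiv.Perm (ZMod n)) (i : ZMod n) (j : ℤ) :
    jDiff x y (halfPt ((i - 1).val) j) = jDiff x y (halfPt (i.val - 1) j) := by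
  rw [ZMod.val_sub_one_intCast]
  split_ifs with hi
  · rw [jDiff_halfPt_eq_zero_of_fst (Or.inr rfl), jDiff_halfPt_eq_zero_of_fst (by simp [hi])]
  · rfl

lemma jDiff_halfPt_val_sub_one_snd (x y : Equiv.Perm (ZMod n)) (i : ℤ) (j : ZMod n) :
    jDiff x y (halfPt i ((j - 1).val)) = jDiff x y (halfPt i (j.val - 1)) := by
  rw [ZMod.val_sub_one_intCast]
  split_ifs with hj
  · rw [jDiff_halfPt_eq_zero_of_snd (Or.inr rfl), jDiff_halfPt_eq_zero_of_snd (by simp [hj])]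
  · rfl

def mixedDiff {G : Type*} [AddCommGroup G] (F : ZMod n × ZMod n → G) (p : ZMod n × ZMod n) : G :=
  F p - F (p.1 - 1, p.2) - F (p.1, p.2 - 1) + F (p.1 - 1, p.2 - 1)

def cornerAvg (F : ZMod n × ZMod n → ℚ) (p : ZMod n × ZMod n) : ℚ :=
  (F p + F (p.1 - 1, p.2) + F (p.1, p.2 - 1) + F (p.1 - 1, p.2 - 1)) / 4

lemma exists_eq_add_of_mixedDiff_eq_zero {G : Type*} [AddCommGroup G] {F : ZMod n × ZMod n → G}
    (hF : ∀ p, mixedDiff F p = 0) : ∃ A B : ZMod n → G, ∀ p, F p = A p.1 + B p.2 := by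
  have hrow (i j : ZMod n) : F (i, j) - F (i - 1, j) = F (i, 0) - F (i - 1, 0) :=
    ZMod.apply_eq_apply_zero_of_forall (f := fun j => F (i, j) - F (i - 1, j))
      (fun j => by
        have h := hF (i, j)
        simp only [mixedDiff] at h
        rw [← sub_eq_zero, ← h]
        abel) j
  have hcol (i j : ZMod n) : F (i, j) - F (i, 0) = F (0, j) - F (0, 0) :=
    ZMod.apply_eq_apply_zero_of_forall (f := fun i => F (i, j) - F (i, 0))
      (fun i => by rw [← sub_eq_zero, ← sub_eq_zero.mpr (hrow i j)]; abel) i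
  refine ⟨fun i => F (i, 0) - F (0, 0), fun j => F (0, j), fun ⟨i, j⟩ => ?_⟩
  dsimp only
  rw [sub_eq_iff_eq_add.mp (hcol i j)]
  abel

def canonicalDomain (x y : Equiv.Perm (ZMod n)) (p : ZMod n × ZMod n) : ℚ :=
  jDiff x y (halfPt p.1.val p.2.val)

lemma mixedDiff_canonicalDomain (x y : Equiv.Perm (ZMod n)) (i j : ZMod n) :
    mixedDiff (canonicalDomain x y) (i, j)
      = (if x i = j then 1 else 0) - (if y i = j then 1 else 0) := by
  simp only [mixedDiff, canonicalDomain, jDiff_halfPt_val_sub_one_fst,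
    jDiff_halfPt_val_sub_one_snd]
  simp only [jDiff]
  linarith [genJ_mixedDiff x i j, genJ_mixedDiff y i j]

lemma IsGridDomain.mixedDiff_sub_canonicalDomain {x y : Equiv.Perm (ZMod n)}
    {D : ZMod n × ZMod n → ℤ} (hD : IsGridDomain n x y D) (p : ZMod n × ZMod n) :
    mixedDiff (fun q => (D q : ℚ) - canonicalDomain x y q) p = 0 := by
  obtain ⟨i, j⟩ := p
  have hDq : ((D (i, j) - D (i - 1, j) - D (i, j - 1) + D (i - 1, j - 1) : ℤ) : ℚ)
      = (if x i = j then 1 else 0) - (if y i = j then 1 else 0) := by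
    rw [hD i j]; push_cast; rfl
  have hΦ := mixedDiff_canonicalDomain x y i j
  simp only [mixedDiff] at hΦ ⊢
  push_cast at hDq
  linarith

lemma sum_canonicalDomain_oPt (x y ρ : Equiv.Perm (ZMod n)) :
    ∑ i, canonicalDomain x y (i, ρ i)
      = JJ n (genPt n x) (oPt n ρ) - JJ n (genPt n y) (oPt n ρ) := by
  simp only [canonicalDomain, halfPt_natCast, ← sum_jDiff]
  rfl

lemma sum_canonicalDomain_xPt (x y ρ : Equiv.Perm (ZMod n)) :
    ∑ i, canonicalDomain x y (i - 1, ρ i)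
      = JJ n (genPt n x) (xPt n ρ) - JJ n (genPt n y) (xPt n ρ) := by
  simp only [canonicalDomain, halfPt_natCast, ← sum_jDiff]
  rfl

lemma sum_cornerAvg_canonicalDomain (x y σ : Equiv.Perm (ZMod n)) :
    ∑ i, cornerAvg (canonicalDomain x y) (i, σ i)
      = pairSum JptAvg (genPt n x) (genPt n σ) - pairSum JptAvg (genPt n y) (genPt n σ) := by
  have (i : ZMod n) : cornerAvg (canonicalDomain x y) (i, σ i)
      = ∑ k, JptAvg (genPt n x k) (genPt n σ i) - ∑ k, JptAvg (genPt n y k) (genPt n σ i) := by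
    simp only [cornerAvg, canonicalDomain, jDiff_halfPt_val_sub_one_fst,
      jDiff_halfPt_val_sub_one_snd]
    simp only [jDiff]
    rw [genPt, ← genJ_avg, ← genJ_avg]
    ring
  simp only [this, sum_sub_distrib, pairSum]
  congr 1 <;> exact sum_comm

lemma sum_cornerAvg_canonicalDomain_add (x y : Equiv.Perm (ZMod n)) :
    ∑ i, cornerAvg (canonicalDomain x y) (i, x i) + ∑ i, cornerAvg (canonicalDomain x y) (i, y i)
      = JJ n (genPt n x) (genPt n x) - JJ n (genPt n y) (genPt n y) := by
  rw [sum_cornerAvg_canonicalDomain, sum_cornerAvg_canonicalDomain,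
    pairSum_comm JptAvg_comm (genPt n y) (genPt n x), pairSum_JptAvg_self, pairSum_JptAvg_self]
  ring

section RowColumnSplit

variable {F Φ : ZMod n × ZMod n → ℚ} {A B : ZMod n → ℚ}

lemma sum_shift_of_eq_add (hF : ∀ p, F p = Φ p + (A p.1 + B p.2)) (σ : Equiv.Perm (ZMod n))
    (a b : ZMod n) :
    ∑ i, F (i - a, σ i - b) = ∑ i, Φ (i - a, σ i - b) + (∑ i, A i + ∑ j, B j) := by
  simp only [hF, sum_add_distrib]
  congr 2
  · exact Equiv.sum_comp (Equiv.subRight a) A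
  · exact Equiv.sum_comp (σ.trans (Equiv.subRight b)) B

lemma sum_of_eq_add (hF : ∀ p, F p = Φ p + (A p.1 + B p.2)) (σ : Equiv.Perm (ZMod n)) :
    ∑ i, F (i, σ i) = ∑ i, Φ (i, σ i) + (∑ i, A i + ∑ j, B j) := by
  simpa using sum_shift_of_eq_add hF σ 0 0

lemma sum_cornerAvg_of_eq_add (hF : ∀ p, F p = Φ p + (A p.1 + B p.2))
    (σ : Equiv.Perm (ZMod n)) :
    ∑ i, cornerAvg F (i, σ i) = ∑ i, cornerAvg Φ (i, σ i) + (∑ i, A i + ∑ j, B j) := by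
  have h10 := sum_shift_of_eq_add hF σ 1 0
  have h01 := sum_shift_of_eq_add hF σ 0 1
  have h11 := sum_shift_of_eq_add hF σ 1 1
  simp only [sub_zero] at h10 h01
  simp only [cornerAvg, ← sum_div, sum_add_distrib, sum_of_eq_add hF σ, h10, h01, h11]
  ring

end RowColumnSplit

end GridDiagram

open GridDiagram

/-- For a domain `D` from `x̃` to `ỹ`:
`M(x̃) − M(ỹ) = μ(D) − 2 Σ_i n_{O_i}(D)` and
`A(x̃) − A(ỹ) = Σ_i (n_{X_i}(D) − n_{O_i}(D))`. -/
theorem grading_change_of_domain (n : ℕ) [NeZero n] (ρ x y : Equiv.Perm (ZMod n))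
    (D : ZMod n × ZMod n → ℤ) (hD : IsGridDomain n x y D) :
    MGr n ρ x - MGr n ρ y
      = maslovIndex n x y D - 2 * ∑ i : ZMod n, (D (i, ρ i) : ℚ) ∧
    AGr n ρ x - AGr n ρ y
      = ∑ i : ZMod n, ((D (i - 1, ρ i) : ℚ) - (D (i, ρ i) : ℚ)) := by
  obtain ⟨A, B, hAB⟩ := exists_eq_add_of_mixedDiff_eq_zero hD.mixedDiff_sub_canonicalDomain
  have hD' (p : ZMod n × ZMod n) : (D p : ℚ) = canonicalDomain x y p + (A p.1 + B p.2) := by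
    rw [← hAB p]; ring
  have hO := sum_of_eq_add hD' ρ
  have hX := sum_shift_of_eq_add hD' ρ 1 0
  simp only [sub_zero] at hX
  constructor
  · have hμ : maslovIndex n x y D = ∑ i, cornerAvg (fun p => (D p : ℚ)) (i, x i)
        + ∑ i, cornerAvg (fun p => (D p : ℚ)) (i, y i) := rfl
    rw [MGr_sub_MGr, hμ, sum_cornerAvg_of_eq_add hD', sum_cornerAvg_of_eq_add hD', hO,
      ← sum_canonicalDomain_oPt, ← sum_cornerAvg_canonicalDomain_add]
    ring
  · rw [AGr_sub_AGr, sum_sub_distrib, hX, hO, sum_canonicalDomain_oPt, sum_canonicalDomain_xPt]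
    ring
end

section
/- The Maslov grading M and Alexander grading A of a generator of a grid diagram are integers (not just half-integers), and are independent of the choice of α and β circles along which the torus is cut open to form the planar diagram. -/
/-- Planar coordinate of the column/row `i` when the torus is cut open along the
circle `s`: columns are renumbered `0, …, n−1` starting just after `s`. -/
def cCoord (n : ℕ) (s i : ZMod n) : ℚ := (((i - s : ZMod n)).val : ℚ)

/-- The points of a generator `x`, cut open along the β circle `s` and α circle `t`. -/
def genPtC (n : ℕ) (s t : ZMod n) (x : Equiv.Perm (ZMod n)) (i : ZMod n) : ℚ × ℚ :=
  (cCoord n s i, cCoord n t (x i))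

/-- The marking `O_i` (center of square `(i, ρ i)`), in the cut `(s, t)`. -/
def oPtC (n : ℕ) (s t : ZMod n) (ρ : Equiv.Perm (ZMod n)) (i : ZMod n) : ℚ × ℚ :=
  (cCoord n s i + 1/2, cCoord n t (ρ i) + 1/2)

/-- The marking `X_i` (center of square `(i-1, ρ i)`), in the cut `(s, t)`. -/
def xPtC (n : ℕ) (s t : ZMod n) (ρ : Equiv.Perm (ZMod n)) (i : ZMod n) : ℚ × ℚ :=
  (cCoord n s (i - 1) + 1/2, cCoord n t (ρ i) + 1/2)

/-- Maslov grading computed with the cut `(s, t)`. -/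
def MGrC (n : ℕ) [NeZero n] (s t : ZMod n) (ρ x : Equiv.Perm (ZMod n)) : ℚ :=
  JJ n (genPtC n s t x) (genPtC n s t x) - JJ n (genPtC n s t x) (oPtC n s t ρ)
    - JJ n (oPtC n s t ρ) (genPtC n s t x) + JJ n (oPtC n s t ρ) (oPtC n s t ρ) + 1

/-- Alexander grading computed with the cut `(s, t)`. -/
def AGrC (n : ℕ) [NeZero n] (s t : ZMod n) (ρ x : Equiv.Perm (ZMod n)) : ℚ :=
  JJ n (genPtC n s t x) (xPtC n s t ρ) - JJ n (genPtC n s t x) (oPtC n s t ρ)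
    - (1/2) * (JJ n (xPtC n s t ρ) (xPtC n s t ρ) - JJ n (xPtC n s t ρ) (oPtC n s t ρ)
        + JJ n (oPtC n s t ρ) (xPtC n s t ρ) - JJ n (oPtC n s t ρ) (oPtC n s t ρ))
    - ((n : ℚ) - 1)/2

/-!
Write `J(p, q) = (σ + σ²) / 4`, where `σ` is the product of the column sign and the row sign of
`p - q`. For families with one point per column, the column sign is the sign `ε_s(i, j)` of the
cut-open column indices, so every `J` term is `¼ ∑ ε_s(i, j) B(i, j)` with `B` built from row data
only, plus terms that do not see the β cut `s`. Moving the cut from `s` to `s + 1` moves column `s`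
from the far left to the far right, which changes `∑ ε_s B` by twice the row sum of `B` at `s`
minus twice its column sum. For the Maslov grading `B` is antisymmetric and every row sums to zero,
because each row and each column of the grid carries exactly one point of `x` and one `O`.
Transposing the diagram exchanges the two cuts. Since `J` is symmetric,
`A = (M_O - M_X) / 2 - (n - 1) / 2`, where `M_X` is the Maslov grading for the `X` markings, so `A`
is cut-independent as well.

`J(P, P)` counts the comparable unordered pairs of `P` and `2 J(P, Q)` is an integer, so
`M = J(x, x) + J(O, O) - 2 J(x, O) + 1 ∈ ℤ`. For `A`, the `X` markings have the same rows as the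
`O` markings and their columns are a permutation of those of the `O` markings. As
`2 J(p, q) ≡ 1 + [q₁ < p₁] + [q₂ < p₂] (mod 2)` for points in general position,
`J(x, X) - J(x, O)` is an integer. Moreover the `X` markings in the cut `s` are the `O` markings in
the cut `s + 1`, so the shift formula gives `J(X, X) - J(O, O) = ∑ⱼ sign(ρ s - ρ j)`,
which is `≡ n - 1 (mod 2)`.
-/

open Finset SignType

lemma sign_add_of_abs_lt {q d : ℚ} (h : |d| < |q|) : sign (q + d) = sign q := by
  obtain ⟨hd₁, hd₂⟩ := abs_lt.mp h
  rcases lt_trichotomy q 0 with hq | hq | hq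
  · rw [abs_of_neg hq] at hd₂
    rw [sign_neg hq, sign_neg (by linarith)]
  · simp only [hq, abs_zero] at h
    exact absurd h (abs_nonneg d).not_gt
  · rw [abs_of_pos hq] at hd₁
    rw [sign_pos hq, sign_pos (by linarith)]

lemma Jpt_eq_sign (a b : ℚ × ℚ) :
    Jpt a b = ((sign (a.1 - b.1) * sign (a.2 - b.2) : ℚ)
      + (sign (a.1 - b.1) * sign (a.2 - b.2) : ℚ) ^ 2) / 4 := by
  rw [← SignType.coe_mul, ← sign_mul, Jpt]
  rcases lt_trichotomy ((a.1 - b.1) * (a.2 - b.2)) 0 with h | h | h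
  · simp [h.not_gt, sign_neg h]
  · simp [h]
  · simp [h, sign_pos h]
    norm_num

lemma Jpt_comm (a b : ℚ × ℚ) : Jpt a b = Jpt b a := by
  simp only [Jpt, ← neg_sub a.1, ← neg_sub a.2, neg_mul_neg]

lemma JJ_comm (n : ℕ) [NeZero n] (f g : ZMod n → ℚ × ℚ) : JJ n f g = JJ n g f := by
  rw [JJ, JJ, sum_comm]
  simp only [Jpt_comm]

section CutCoordinates

variable {n : ℕ} [NeZero n]

lemma cCoord_inj {s i j : ZMod n} : cCoord n s i = cCoord n s j ↔ i = j := by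
  rw [cCoord, cCoord, Nat.cast_inj, (ZMod.val_injective n).eq_iff, sub_left_inj]

lemma cCoord_lt (s i : ZMod n) : cCoord n s i < n := by
  rw [cCoord, Nat.cast_lt]
  exact ZMod.val_lt _

omit [NeZero n] in
lemma cCoord_self (s : ZMod n) : cCoord n s s = 0 := by
  rw [cCoord, sub_self, ZMod.val_zero, Nat.cast_zero]

omit [NeZero n] in
lemma cCoord_pos {s i : ZMod n} (h : i ≠ s) : 0 < cCoord n s i :=
  Nat.cast_pos.mpr (Nat.pos_of_ne_zero ((ZMod.val_ne_zero _).mpr (sub_ne_zero.mpr h)))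

lemma cCoord_succ {s i : ZMod n} (h : i ≠ s) : cCoord n (s + 1) i = cCoord n s i - 1 := by
  have hn : n ≠ 1 := by
    rintro rfl
    exact h (Subsingleton.elim _ _)
  have h1 : (1 : ZMod n).val ≤ (i - s).val := by
    rw [ZMod.val_one_eq_one_mod, Nat.one_mod_eq_one.mpr hn, Nat.one_le_iff_ne_zero,
      ZMod.val_ne_zero]
    exact sub_ne_zero.mpr h
  rw [cCoord, cCoord, ← sub_sub, ZMod.val_sub h1, Nat.cast_sub h1, ZMod.val_one_eq_one_mod,
    Nat.one_mod_eq_one.mpr hn, Nat.cast_one]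

lemma cCoord_succ_self (s : ZMod n) : cCoord n (s + 1) s = n - 1 := by
  obtain ⟨m, rfl⟩ := Nat.exists_eq_succ_of_ne_zero (NeZero.ne n)
  rw [cCoord, sub_add_cancel_left, ZMod.val_neg_one, Nat.cast_succ, add_sub_cancel_right]

lemma one_le_abs_cCoord_sub {s i j : ZMod n} (h : i ≠ j) :
    1 ≤ |cCoord n s i - cCoord n s j| := by
  have hv : ((i - s).val : ℤ) - (j - s).val ≠ 0 := sub_ne_zero.mpr fun hv =>
    h (sub_left_injective (ZMod.val_injective n (Nat.cast_injective hv)))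
  rw [cCoord, cCoord]
  exact_mod_cast Int.one_le_abs hv

end CutCoordinates

def cutSign (n : ℕ) (s i j : ZMod n) : ℚ := sign (cCoord n s i - cCoord n s j)

def signPairing (n : ℕ) [NeZero n] (s : ZMod n) : (ZMod n → ZMod n → ℚ) →ₗ[ℚ] ℚ where
  toFun B := ∑ i, ∑ j, cutSign n s i j * B i j
  map_add' B C := by simp only [Pi.add_apply, mul_add, sum_add_distrib]
  map_smul' c B := by
    simp only [Pi.smul_apply, smul_eq_mul, RingHom.id_apply, mul_sum]
    exact sum_congr rfl fun i _ => sum_congr rfl fun j _ => mul_left_comm _ _ _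

section SignPairing

variable {n : ℕ} [NeZero n]

omit [NeZero n] in
lemma cutSign_self (s i : ZMod n) : cutSign n s i i = 0 := by
  simp [cutSign]

lemma cutSign_sq {s i j : ZMod n} (h : i ≠ j) : cutSign n s i j ^ 2 = 1 := by
  rcases lt_or_gt_of_ne (cCoord_inj (s := s) |>.not.mpr h) with hij | hij
  · simp [cutSign, sign_neg (sub_neg.mpr hij)]
  · simp [cutSign, sign_pos (sub_pos.mpr hij)]

lemma cutSign_succ (s i j : ZMod n) :
    cutSign n (s + 1) i j
      = cutSign n s i j + 2 * ((if i = s then 1 else 0) - (if j = s then 1 else 0)) := by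
  by_cases hi : i = s <;> by_cases hj : j = s
  · subst hi hj
    simp [cutSign_self]
  · subst hi
    have := cCoord_lt i j
    have := cCoord_pos hj
    rw [cutSign, cutSign, cCoord_succ_self, cCoord_succ hj, cCoord_self,
      sign_pos (by linarith), sign_neg (by linarith)]
    simp [hj]
    norm_num
  · subst hj
    have := cCoord_lt j i
    have := cCoord_pos hi
    rw [cutSign, cutSign, cCoord_succ_self, cCoord_succ hi, cCoord_self,
      sign_neg (by linarith), sign_pos (by linarith)]
    simp [hi]
    norm_num
  · rw [cutSign, cutSign, cCoord_succ hi, cCoord_succ hj, if_neg hi, if_neg hj,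
      sub_sub_sub_cancel_right]
    ring

lemma signPairing_apply (s : ZMod n) (B : ZMod n → ZMod n → ℚ) :
    signPairing n s B = ∑ i, ∑ j, cutSign n s i j * B i j := rfl

lemma signPairing_succ_of_antisymm {B : ZMod n → ZMod n → ℚ} (hB : ∀ i j, B j i = -B i j)
    (s : ZMod n) : signPairing n (s + 1) B = signPairing n s B + 4 * ∑ j, B s j := by
  have hcol : ∑ i, B i s = -∑ j, B s j := by
    rw [← sum_neg_distrib]
    exact sum_congr rfl fun i _ => hB s i
  have hrow : ∑ i, ∑ j, (if i = s then B i j else 0) = ∑ j, B s j := by simp [sum_ite_irrel]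
  simp only [signPairing_apply, cutSign_succ, add_mul, sum_add_distrib, mul_assoc, sub_mul,
    ite_mul, one_mul, zero_mul, mul_sub, sum_sub_distrib, ← mul_sum, sum_ite_eq', mem_univ,
    if_true]
  rw [hrow, hcol]
  ring

lemma signPairing_eq_of_antisymm {B : ZMod n → ZMod n → ℚ} (hB : ∀ i j, B j i = -B i j)
    (hrow : ∀ i, ∑ j, B i j = 0) (s s' : ZMod n) : signPairing n s B = signPairing n s' B := by
  have hstep : ∀ k : ℕ, signPairing n (s + k) B = signPairing n s B := by
    intro k
    induction k with
    | zero => simp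
    | succ k ih =>
      rw [Nat.cast_succ, ← add_assoc, signPairing_succ_of_antisymm hB, hrow, ih, mul_zero,
        add_zero]
  rw [← hstep (s' - s).val, ZMod.natCast_zmod_val, add_sub_cancel]

end SignPairing

def crossSign {n : ℕ} (y z : ZMod n → ℚ) (i j : ZMod n) : ℚ := sign (y i - z j)

section Expansion

variable {n : ℕ} [NeZero n]

lemma four_mul_Jpt_cut (s i j : ZMod n) {a b : ℚ} (hab : |a - b| < 1) (u v : ℚ) :
    4 * Jpt (cCoord n s i + a, u) (cCoord n s j + b, v)
      = cutSign n s i j * sign (u - v)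
        + if i = j then 4 * Jpt (a, u) (b, v) else (sign (u - v) : ℚ) ^ 2 := by
  by_cases h : i = j
  · subst h
    rw [cutSign_self, zero_mul, zero_add, if_pos rfl, Jpt, Jpt, add_sub_add_left_eq_sub]
  · have hcol : sign (cCoord n s i + a - (cCoord n s j + b)) = cutSign n s i j := by
      rw [cutSign, add_sub_add_comm]
      exact congrArg _ (sign_add_of_abs_lt (hab.trans_le (one_le_abs_cCoord_sub h)))
    rw [if_neg h, Jpt_eq_sign]
    dsimp only
    rw [hcol]
    linear_combination (sign (u - v) : ℚ) ^ 2 * cutSign_sq (s := s) h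

lemma four_mul_JJ_cut (s : ZMod n) {a b : ℚ} (hab : |a - b| < 1) (y z : ZMod n → ℚ) :
    4 * JJ n (fun i => (cCoord n s i + a, y i)) (fun j => (cCoord n s j + b, z j))
      = signPairing n s (crossSign y z)
        + ∑ i, ∑ j, if i = j then 4 * Jpt (a, y i) (b, z j) else (sign (y i - z j) : ℚ) ^ 2 := by
  simp only [JJ, mul_sum, four_mul_Jpt_cut s _ _ hab, sum_add_distrib, signPairing_apply,
    crossSign]

end Expansion

def maslovKernel {n : ℕ} (y z : ZMod n → ℚ) : ZMod n → ZMod n → ℚ :=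
  crossSign y y - crossSign y z - crossSign z y + crossSign z z

lemma crossSign_swap {n : ℕ} (y z : ZMod n → ℚ) (i j : ZMod n) :
    crossSign z y j i = -crossSign y z i j := by
  rw [crossSign, crossSign, ← neg_sub, Left.sign_neg, SignType.coe_neg]

lemma maslovKernel_antisymm {n : ℕ} (y z : ZMod n → ℚ) (i j : ZMod n) :
    maslovKernel y z j i = -maslovKernel y z i j := by
  simp only [maslovKernel, Pi.add_apply, Pi.sub_apply, crossSign_swap y y i j,
    crossSign_swap y z i j, crossSign_swap z y i j, crossSign_swap z z i j]
  ring

section Maslov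

variable {n : ℕ} [NeZero n]

lemma sum_sign_sub_sign_sub_half (t a : ZMod n) {u : ℚ}
    (hu : u = cCoord n t a ∨ u = cCoord n t a + 1 / 2) (σ τ : Equiv.Perm (ZMod n)) :
    ∑ k, ((sign (u - cCoord n t (σ k)) : ℚ) - sign (u - (cCoord n t (τ k) + 1 / 2))) = 1 := by
  rw [sum_sub_distrib, Equiv.sum_comp σ (fun k => (sign (u - cCoord n t k) : ℚ)),
    Equiv.sum_comp τ (fun k => (sign (u - (cCoord n t k + 1 / 2)) : ℚ)), ← sum_sub_distrib]
  have hk : ∀ k, (sign (u - cCoord n t k) : ℚ) - sign (u - (cCoord n t k + 1 / 2))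
      = if a = k then 1 else 0 := by
    intro k
    by_cases h : a = k
    · subst h
      rcases hu with rfl | rfl <;> norm_num
    · have hp := one_le_abs_cCoord_sub (s := t) h
      rw [if_neg h]
      rcases hu with rfl | rfl
      · rw [show cCoord n t a - (cCoord n t k + 1 / 2) = cCoord n t a - cCoord n t k + -(1 / 2)
          by ring, sign_add_of_abs_lt (by norm_num; linarith)]
        ring
      · rw [show cCoord n t a + 1 / 2 - (cCoord n t k + 1 / 2) = cCoord n t a - cCoord n t k
          by ring, show cCoord n t a + 1 / 2 - cCoord n t k = cCoord n t a - cCoord n t k + 1 / 2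
          by ring, sign_add_of_abs_lt (by norm_num; linarith)]
        ring
  simp only [hk, sum_ite_eq, mem_univ, if_true]

lemma sum_maslovKernel_row (t : ZMod n) (ρ x : Equiv.Perm (ZMod n)) (i : ZMod n) :
    ∑ j, maslovKernel (fun k => cCoord n t (x k)) (fun k => cCoord n t (ρ k) + 1 / 2) i j = 0 := by
  have hy := sum_sign_sub_sign_sub_half t (x i) (Or.inl rfl) x ρ
  have hz := sum_sign_sub_sign_sub_half t (ρ i) (Or.inr rfl) x ρ
  simp only [maslovKernel, crossSign, Pi.add_apply, Pi.sub_apply, sum_add_distrib,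
    sum_sub_distrib] at hy hz ⊢
  linarith

lemma MGrC_eq_of_cut_fst (s s' t : ZMod n) (ρ x : Equiv.Perm (ZMod n)) :
    MGrC n s t ρ x = MGrC n s' t ρ x := by
  set y : ZMod n → ℚ := fun k => cCoord n t (x k)
  set z : ZMod n → ℚ := fun k => cCoord n t (ρ k) + 1 / 2
  have hx : ∀ r, genPtC n r t x = fun i => (cCoord n r i + 0, y i) := fun r => by
    funext i
    simp [genPtC, y]
  have ho : ∀ r, oPtC n r t ρ = fun i => (cCoord n r i + 1 / 2, z i) := fun r => rfl
  have hW : ∀ r, signPairing n r (maslovKernel y z) = signPairing n r (crossSign y y)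
      - signPairing n r (crossSign y z) - signPairing n r (crossSign z y)
      + signPairing n r (crossSign z z) := fun r => by
    simp only [maslovKernel, map_add, map_sub]
  have hbal := signPairing_eq_of_antisymm (maslovKernel_antisymm y z)
    (sum_maslovKernel_row t ρ x) s s'
  have e₀₀ := fun r => four_mul_JJ_cut r (a := 0) (b := 0) (by norm_num) y y
  have e₀₁ := fun r => four_mul_JJ_cut r (a := 0) (b := 1 / 2) (by norm_num) y z
  have e₁₀ := fun r => four_mul_JJ_cut r (a := 1 / 2) (b := 0) (by norm_num) z y
  have e₁₁ := fun r => four_mul_JJ_cut r (a := 1 / 2) (b := 1 / 2) (by norm_num) z z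
  rw [MGrC, MGrC, hx, hx, ho, ho]
  linear_combination (e₀₀ s - e₀₁ s - e₁₀ s + e₁₁ s - e₀₀ s' + e₀₁ s' + e₁₀ s' - e₁₁ s'
    - hW s + hW s' + hbal) / 4

end Maslov

section Transpose

variable {n : ℕ} [NeZero n]

lemma Jpt_swap (a b : ℚ × ℚ) : Jpt a.swap b.swap = Jpt a b := by
  simp only [Jpt, Prod.fst_swap, Prod.snd_swap, mul_comm]

lemma JJ_eq_of_swap {f g f' g' : ZMod n → ℚ × ℚ} (e e' : Equiv.Perm (ZMod n))
    (hf : ∀ i, f' (e i) = (f i).swap) (hg : ∀ j, g' (e' j) = (g j).swap) :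
    JJ n f' g' = JJ n f g := by
  rw [JJ, JJ, ← Equiv.sum_comp e]
  refine sum_congr rfl fun i _ => ?_
  rw [← Equiv.sum_comp e']
  simp only [hf, hg, Jpt_swap]

omit [NeZero n] in
lemma genPtC_swap (s t : ZMod n) (x : Equiv.Perm (ZMod n)) (i : ZMod n) :
    genPtC n t s x⁻¹ (x i) = (genPtC n s t x i).swap := by
  simp [genPtC]

omit [NeZero n] in
lemma oPtC_swap (s t : ZMod n) (ρ : Equiv.Perm (ZMod n)) (i : ZMod n) :
    oPtC n t s ρ⁻¹ (ρ i) = (oPtC n s t ρ i).swap := by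
  simp [oPtC]

lemma MGrC_transpose (s t : ZMod n) (ρ x : Equiv.Perm (ZMod n)) :
    MGrC n s t ρ x = MGrC n t s ρ⁻¹ x⁻¹ := by
  rw [MGrC, MGrC, JJ_eq_of_swap x x (genPtC_swap s t x) (genPtC_swap s t x),
    JJ_eq_of_swap x ρ (genPtC_swap s t x) (oPtC_swap s t ρ),
    JJ_eq_of_swap ρ x (oPtC_swap s t ρ) (genPtC_swap s t x),
    JJ_eq_of_swap ρ ρ (oPtC_swap s t ρ) (oPtC_swap s t ρ)]

lemma MGrC_cut_indep (s t s' t' : ZMod n) (ρ x : Equiv.Perm (ZMod n)) :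
    MGrC n s t ρ x = MGrC n s' t' ρ x := by
  rw [MGrC_eq_of_cut_fst s s' t, MGrC_transpose s' t, MGrC_eq_of_cut_fst t t' s',
    ← MGrC_transpose]

end Transpose

def shiftPerm {n : ℕ} (ρ : Equiv.Perm (ZMod n)) : Equiv.Perm (ZMod n) :=
  (Equiv.addRight 1).trans ρ

section Alexander

variable {n : ℕ} [NeZero n]

omit [NeZero n] in
lemma xPtC_add_one (s t : ZMod n) (ρ : Equiv.Perm (ZMod n)) (i : ZMod n) :
    xPtC n s t ρ (i + 1) = oPtC n s t (shiftPerm ρ) i := by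
  simp [xPtC, oPtC, shiftPerm]

lemma JJ_xPtC_right (s t : ZMod n) (ρ : Equiv.Perm (ZMod n)) (f : ZMod n → ℚ × ℚ) :
    JJ n f (xPtC n s t ρ) = JJ n f (oPtC n s t (shiftPerm ρ)) := by
  refine sum_congr rfl fun i _ => ?_
  rw [← Equiv.sum_comp (Equiv.addRight 1)]
  simp only [Equiv.coe_addRight, xPtC_add_one]

lemma JJ_xPtC_left (s t : ZMod n) (ρ : Equiv.Perm (ZMod n)) (f : ZMod n → ℚ × ℚ) :
    JJ n (xPtC n s t ρ) f = JJ n (oPtC n s t (shiftPerm ρ)) f := by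
  rw [JJ_comm, JJ_xPtC_right, JJ_comm]

lemma AGrC_eq_MGrC_sub (s t : ZMod n) (ρ x : Equiv.Perm (ZMod n)) :
    AGrC n s t ρ x = (MGrC n s t ρ x - MGrC n s t (shiftPerm ρ) x) / 2 - ((n : ℚ) - 1) / 2 := by
  simp only [AGrC, MGrC, JJ_xPtC_right, JJ_xPtC_left]
  linear_combination (JJ_comm n (oPtC n s t (shiftPerm ρ)) (oPtC n s t ρ)
    + JJ_comm n (oPtC n s t ρ) (genPtC n s t x)
    - JJ_comm n (oPtC n s t (shiftPerm ρ)) (genPtC n s t x)) / 2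

lemma AGrC_cut_indep (s t s' t' : ZMod n) (ρ x : Equiv.Perm (ZMod n)) :
    AGrC n s t ρ x = AGrC n s' t' ρ x := by
  rw [AGrC_eq_MGrC_sub, AGrC_eq_MGrC_sub, MGrC_cut_indep s t s' t', MGrC_cut_indep s t s' t']

end Alexander

section Integrality

lemma two_mul_Jpt_mem_bot (a b : ℚ × ℚ) : 2 * Jpt a b ∈ (⊥ : Subring ℚ) := by
  rw [Jpt]
  split_ifs <;> norm_num

lemma Jpt_self (a : ℚ × ℚ) : Jpt a a = 0 := by
  simp [Jpt]

lemma sum_sum_mem_bot_of_symm {ι : Type*} [Fintype ι] (F : ι → ι → ℚ)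
    (hF : ∀ i j, F j i = F i j) (hdiag : ∀ i, F i i = 0)
    (hint : ∀ i j, 2 * F i j ∈ (⊥ : Subring ℚ)) : ∑ i, ∑ j, F i j ∈ (⊥ : Subring ℚ) := by
  let _ : LinearOrder ι := LinearOrder.lift' _ (Fintype.equivFin ι).injective
  have hsplit : ∀ i j, F i j = (if i < j then F i j else 0) + (if j < i then F i j else 0) := by
    intro i j
    rcases lt_trichotomy i j with h | rfl | h
    · simp [h, h.not_gt]
    · simp [hdiag]
    · simp [h, h.not_gt]
  have hlower : ∑ i, ∑ j, (if j < i then F i j else 0) = ∑ i, ∑ j, if i < j then F i j else 0 := by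
    rw [sum_comm]
    exact sum_congr rfl fun i _ => sum_congr rfl fun j _ => by rw [hF]
  have htwice : ∑ i, ∑ j, F i j = ∑ i, ∑ j, if i < j then 2 * F i j else 0 := by
    conv_lhs => rw [sum_congr rfl fun i _ => sum_congr rfl fun j _ => hsplit i j]
    simp only [sum_add_distrib, hlower, ← two_mul, mul_sum, mul_ite, mul_zero]
  rw [htwice]
  refine sum_mem fun i _ => sum_mem fun j _ => ?_
  split_ifs
  exacts [hint i j, zero_mem _]

variable {n : ℕ} [NeZero n]

lemma JJ_self_mem_bot (f : ZMod n → ℚ × ℚ) : JJ n f f ∈ (⊥ : Subring ℚ) :=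
  sum_sum_mem_bot_of_symm _ (fun _ _ => Jpt_comm _ _) (fun _ => Jpt_self _)
    (fun _ _ => two_mul_Jpt_mem_bot _ _)

lemma two_mul_JJ_mem_bot (f g : ZMod n → ℚ × ℚ) : 2 * JJ n f g ∈ (⊥ : Subring ℚ) := by
  rw [JJ, mul_sum]
  refine sum_mem fun i _ => ?_
  rw [mul_sum]
  exact sum_mem fun j _ => two_mul_Jpt_mem_bot _ _

lemma MGrC_mem_bot (s t : ZMod n) (ρ x : Equiv.Perm (ZMod n)) :
    MGrC n s t ρ x ∈ (⊥ : Subring ℚ) := by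
  have h : MGrC n s t ρ x = JJ n (genPtC n s t x) (genPtC n s t x)
      + JJ n (oPtC n s t ρ) (oPtC n s t ρ) - 2 * JJ n (genPtC n s t x) (oPtC n s t ρ) + 1 := by
    rw [MGrC, JJ_comm n (oPtC n s t ρ)]
    ring
  rw [h]
  exact add_mem (sub_mem (add_mem (JJ_self_mem_bot _) (JJ_self_mem_bot _))
    (two_mul_JJ_mem_bot _ _)) (one_mem _)

lemma two_mul_Jpt_of_ne {a b : ℚ × ℚ} (h₁ : a.1 ≠ b.1) (h₂ : a.2 ≠ b.2) :
    2 * Jpt a b = 1 - (if b.1 < a.1 then 1 else 0) - (if b.2 < a.2 then 1 else 0)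
      + 2 * (if b.1 < a.1 ∧ b.2 < a.2 then 1 else 0) := by
  rcases h₁.lt_or_gt with h₁ | h₁ <;> rcases h₂.lt_or_gt with h₂ | h₂ <;>
    simp [Jpt, mul_pos_iff, h₁, h₂, h₁.not_gt, h₂.not_gt, sub_pos, sub_neg]
  norm_num

lemma JJ_sub_JJ_mem_bot_of_fst_perm {f g g' : ZMod n → ℚ × ℚ}
    (hg : ∀ i j, (f i).1 ≠ (g j).1 ∧ (f i).2 ≠ (g j).2)
    (hg' : ∀ i j, (f i).1 ≠ (g' j).1 ∧ (f i).2 ≠ (g' j).2) (e : Equiv.Perm (ZMod n))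
    (h₁ : ∀ j, (g' (e j)).1 = (g j).1) (h₂ : ∀ j, (g' j).2 = (g j).2) :
    JJ n f g' - JJ n f g ∈ (⊥ : Subring ℚ) := by
  have hfst : ∀ i, ∑ j, (if (g' j).1 < (f i).1 then (1 : ℚ) else 0)
      = ∑ j, if (g j).1 < (f i).1 then 1 else 0 := fun i => by
    rw [← Equiv.sum_comp e]
    simp only [h₁]
  have hrow : ∀ i, ∑ j, Jpt (f i) (g' j) - ∑ j, Jpt (f i) (g j)
      = ∑ j, ((if (g' j).1 < (f i).1 ∧ (g' j).2 < (f i).2 then 1 else 0)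
        - (if (g j).1 < (f i).1 ∧ (g j).2 < (f i).2 then 1 else 0)) := by
    intro i
    have hpt : ∀ j, Jpt (f i) (g' j) - Jpt (f i) (g j)
        = ((if (g j).1 < (f i).1 then 1 else 0) - (if (g' j).1 < (f i).1 then 1 else 0)) / 2
          + ((if (g' j).1 < (f i).1 ∧ (g' j).2 < (f i).2 then 1 else 0)
            - (if (g j).1 < (f i).1 ∧ (g j).2 < (f i).2 then 1 else 0)) := by
      intro j
      have e' := two_mul_Jpt_of_ne (hg' i j).1 (hg' i j).2
      have e := two_mul_Jpt_of_ne (hg i j).1 (hg i j).2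
      rw [h₂] at e' ⊢
      linear_combination (e' - e) / 2
    rw [← sum_sub_distrib, sum_congr rfl fun j _ => hpt j, sum_add_distrib, ← sum_div,
      sum_sub_distrib, hfst, sub_self, zero_div, zero_add]
  rw [JJ, JJ, ← sum_sub_distrib, sum_congr rfl fun i _ => hrow i]
  exact sum_mem fun i _ => sum_mem fun j _ =>
    sub_mem (by split_ifs <;> simp) (by split_ifs <;> simp)

omit [NeZero n] in
lemma cCoord_ne_cCoord_add_half (s t i j : ZMod n) : cCoord n s i ≠ cCoord n t j + 1 / 2 := by
  intro h
  have h2 : (2 * (i - s).val : ℚ) = 2 * (j - t).val + 1 := by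
    rw [cCoord, cCoord] at h
    linarith
  have : 2 * (i - s).val = 2 * (j - t).val + 1 := by exact_mod_cast h2
  omega

lemma JJ_genPtC_xPtC_sub_mem_bot (s t : ZMod n) (ρ x : Equiv.Perm (ZMod n)) :
    JJ n (genPtC n s t x) (xPtC n s t ρ) - JJ n (genPtC n s t x) (oPtC n s t ρ)
      ∈ (⊥ : Subring ℚ) :=
  JJ_sub_JJ_mem_bot_of_fst_perm
    (fun _ _ => ⟨cCoord_ne_cCoord_add_half _ _ _ _, cCoord_ne_cCoord_add_half _ _ _ _⟩)
    (fun _ _ => ⟨cCoord_ne_cCoord_add_half _ _ _ _, cCoord_ne_cCoord_add_half _ _ _ _⟩)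
    (Equiv.addRight 1) (fun j => by simp [xPtC, oPtC]) (fun _ => rfl)

omit [NeZero n] in
lemma xPtC_eq_oPtC_succ (s t : ZMod n) (ρ : Equiv.Perm (ZMod n)) :
    xPtC n s t ρ = oPtC n (s + 1) t ρ := by
  funext i
  simp only [xPtC, oPtC, cCoord, sub_sub, add_comm (1 : ZMod n)]

lemma JJ_xPtC_self_sub (s t : ZMod n) (ρ : Equiv.Perm (ZMod n)) :
    JJ n (xPtC n s t ρ) (xPtC n s t ρ) - JJ n (oPtC n s t ρ) (oPtC n s t ρ)
      = ∑ j, (sign (cCoord n t (ρ s) - cCoord n t (ρ j)) : ℚ) := by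
  set z : ZMod n → ℚ := fun k => cCoord n t (ρ k) + 1 / 2
  have ho : ∀ r, oPtC n r t ρ = fun i => (cCoord n r i + 1 / 2, z i) := fun r => rfl
  have hz : ∀ j, crossSign z z s j = sign (cCoord n t (ρ s) - cCoord n t (ρ j)) := fun j => by
    simp only [crossSign, z, add_sub_add_right_eq_sub]
  have hstep := signPairing_succ_of_antisymm (crossSign_swap z z) s
  have e := fun r => four_mul_JJ_cut r (a := 1 / 2) (b := 1 / 2) (by norm_num) z z
  rw [xPtC_eq_oPtC_succ, ho, ho, ← sum_congr rfl fun j _ => hz j]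
  linear_combination (e (s + 1) - e s + hstep) / 4

lemma sum_sign_cCoord_sub (t a : ZMod n) :
    ∑ k, (sign (cCoord n t a - cCoord n t k) : ℚ)
      = n - 1 - 2 * ∑ k, if cCoord n t a < cCoord n t k then 1 else 0 := by
  have hpt : ∀ k, (sign (cCoord n t a - cCoord n t k) : ℚ)
      = 1 - (if a = k then 1 else 0) - 2 * (if cCoord n t a < cCoord n t k then 1 else 0) := by
    intro k
    rcases lt_trichotomy (cCoord n t a) (cCoord n t k) with h | h | h
    · have hne : a ≠ k := fun hak => h.ne (by rw [hak])
      simp [sign_neg (sub_neg.mpr h), h, hne]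
      norm_num
    · obtain rfl := cCoord_inj.mp h
      simp
    · have hne : a ≠ k := fun hak => h.ne' (by rw [hak])
      simp [sign_pos (sub_pos.mpr h), h.not_gt, hne]
  simp only [hpt, sum_sub_distrib, sum_const, card_univ, ZMod.card, sum_ite_eq, mem_univ, if_true,
    ← mul_sum]
  simp

lemma AGrC_mem_bot (s t : ZMod n) (ρ x : Equiv.Perm (ZMod n)) :
    AGrC n s t ρ x ∈ (⊥ : Subring ℚ) := by
  have hX := JJ_xPtC_self_sub s t ρ
  rw [Equiv.sum_comp ρ (fun k => (sign (cCoord n t (ρ s) - cCoord n t k) : ℚ)),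
    sum_sign_cCoord_sub] at hX
  have h : AGrC n s t ρ x = (JJ n (genPtC n s t x) (xPtC n s t ρ)
      - JJ n (genPtC n s t x) (oPtC n s t ρ))
      + ∑ k, (if cCoord n t (ρ s) < cCoord n t k then 1 else 0) - ((n : ℚ) - 1) := by
    rw [AGrC, JJ_comm n (xPtC n s t ρ) (oPtC n s t ρ)]
    linear_combination (-1 / 2 : ℚ) * hX
  rw [h]
  refine sub_mem (add_mem (JJ_genPtC_xPtC_sub_mem_bot s t ρ x) (sum_mem fun k _ => ?_))
    (sub_mem (natCast_mem _ n) (one_mem _))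
  split_ifs <;> simp

end Integrality

/-- The Maslov and Alexander gradings of a generator are independent of the choice
of α and β circles along which the torus is cut open, and are integers. -/
theorem gradings_welldefined_integral (n : ℕ) [NeZero n]
    (ρ x : Equiv.Perm (ZMod n)) :
    (∀ s t s' t' : ZMod n,
      MGrC n s t ρ x = MGrC n s' t' ρ x ∧ AGrC n s t ρ x = AGrC n s' t' ρ x) ∧
    (∃ m : ℤ, MGrC n 0 0 ρ x = (m : ℚ)) ∧
    (∃ a : ℤ, AGrC n 0 0 ρ x = (a : ℚ)) :=
  ⟨fun s t s' t' => ⟨MGrC_cut_indep s t s' t' ρ x, AGrC_cut_indep s t s' t' ρ x⟩,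
    (Subring.mem_bot.mp (MGrC_mem_bot 0 0 ρ x)).imp fun _ => Eq.symm,
    (Subring.mem_bot.mp (AGrC_mem_bot 0 0 ρ x)).imp fun _ => Eq.symm⟩
end
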